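/- arXiv:1406.5806 — 5 statements merged into one kernel-verified Lean document; each statement's English description precedes it below -/
import Mathlib

section
/- Let f be a mild solution of ζ₁∂ₓf = −ν f + K(f) on [0,l] with ⟨f⟩ < ∞. Then there is a constant C, depending only on γ, ν₀, ν₁, l and the constants in the hypotheses on K, such that for every multi-index α and every 0 < x ≤ min(l,1): |∫_{ζ₁>0} φ_α(ζ) |ζ₁|^{−1} e^{−ν(ζ)x/|ζ₁|} (−ν(ζ)f(0,ζ) + K(f)(0,ζ)) dζ| ≤ C(|ln x| + 1) A_α ⟨f⟩. -/
/-!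
For `ζ₁ > 0` the collision term `-ν f(0) + K f(0)` grows at most linearly in `|ζ|`: `ν f(0)`
because `ν ≤ ν₁ (1 + |ζ|)` (as `γ ≤ 1`) and `f(0)` is bounded on `ζ₁ > 0`, and `K f(0)` by the
`L²` estimate for `K` together with `‖f(0)‖_{L²} ≤ ν₀^{-1/2} ‖f(0)‖_*`. The Gaussian in `φ_α`
absorbs this growth, `(1 + |ζ|) e^{-|ζ|²/2} ≤ 2 e^{-|ζ|²/3}`, so the integrand is dominated by a
product of functions of one variable. Each `|t|^n e^{-t²/3}` has integral at most
`√(12π) (2n)^{n/2} e^{-n/2}`, which produces `A_α`, while the attenuation factor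
`e^{-ν₀ x/t} / t` integrates over `(0, 1]` to at most `|ln (ν₀ x)| + 1`, which produces the
logarithm.
-/

open MeasureTheory Real Set

noncomputable section

/-- Euclidean norm of a point of ℝ³ (written in coordinates). -/
def enr (ζ : Fin 3 → ℝ) : ℝ := Real.sqrt (ζ 0 ^ 2 + ζ 1 ^ 2 + ζ 2 ^ 2)

/-- The weight functions φ_α(ζ) = π^{-3/4} ζ₁^{α₁} ζ₂^{α₂} ζ₃^{α₃} e^{-|ζ|²/2}. -/
def phiα (α : Fin 3 → ℕ) (ζ : Fin 3 → ℝ) : ℝ :=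
  Real.pi ^ (-(3 : ℝ) / 4) * ζ 0 ^ (α 0) * ζ 1 ^ (α 1) * ζ 2 ^ (α 2) *
    Real.exp (-(enr ζ) ^ 2 / 2)

/-- A_α = (2α₁)^{α₁/2}(2α₂)^{α₂/2}(2α₃)^{α₃/2} e^{-(α₁+α₂+α₃)/2} (with 0⁰ = 1). -/
def Aα (α : Fin 3 → ℕ) : ℝ :=
  (2 * (α 0 : ℝ)) ^ ((α 0 : ℝ) / 2) * (2 * (α 1 : ℝ)) ^ ((α 1 : ℝ) / 2) *
    (2 * (α 2 : ℝ)) ^ ((α 2 : ℝ) / 2) *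
    Real.exp (-((α 0 : ℝ) + (α 1 : ℝ) + (α 2 : ℝ)) / 2)

/-- The integral operator K(g)(ζ) = ∫ k(ζ,ζ*) g(ζ*) dζ*. -/
def Kop (k : (Fin 3 → ℝ) → (Fin 3 → ℝ) → ℝ) (g : (Fin 3 → ℝ) → ℝ) (ζ : Fin 3 → ℝ) : ℝ :=
  ∫ ζs, k ζ ζs * g ζs

/-- The norm ‖g‖_* = (∫ g(ζ)² ν(ζ) dζ)^{1/2}. -/
def starNorm (ν : (Fin 3 → ℝ) → ℝ) (g : (Fin 3 → ℝ) → ℝ) : ℝ :=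
  Real.sqrt (∫ ζ, (g ζ) ^ 2 * ν ζ)

/-- Mild (integral-equation) solution of ζ₁ ∂ₓ f = -ν f + K(f) on [0, l]. -/
def MildSolution (l : ℝ) (ν : (Fin 3 → ℝ) → ℝ)
    (k : (Fin 3 → ℝ) → (Fin 3 → ℝ) → ℝ) (f : ℝ → (Fin 3 → ℝ) → ℝ) : Prop :=
  (∀ x ∈ Icc (0 : ℝ) l, ∀ ζ : Fin 3 → ℝ, 0 < ζ 0 →
    f x ζ = Real.exp (-(ν ζ * x) / |ζ 0|) * f 0 ζ +
      ∫ s in (0 : ℝ)..x, (1 / |ζ 0|) * Real.exp (-(ν ζ * (x - s)) / |ζ 0|) * Kop k (f s) ζ) ∧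
  (∀ x ∈ Icc (0 : ℝ) l, ∀ ζ : Fin 3 → ℝ, ζ 0 < 0 →
    f x ζ = Real.exp (-(ν ζ * (l - x)) / |ζ 0|) * f l ζ +
      ∫ s in x..l, (1 / |ζ 0|) * Real.exp (-(ν ζ * (s - x)) / |ζ 0|) * Kop k (f s) ζ)

/-- The maximum of `|t| ^ n * exp (-(t ^ 2 / 4))`, attained at `t ^ 2 = 2 * n`. -/
def powGaussPeak (n : ℕ) : ℝ := (2 * n : ℝ) ^ ((n : ℝ) / 2) * exp (-(n : ℝ) / 2)

lemma Aα_eq_prod_powGaussPeak (α : Fin 3 → ℕ) :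
    Aα α = powGaussPeak (α 0) * powGaussPeak (α 1) * powGaussPeak (α 2) := by
  rw [Aα, show -((α 0 : ℝ) + (α 1 : ℝ) + (α 2 : ℝ)) / 2 =
    -(α 0 : ℝ) / 2 + (-(α 1 : ℝ) / 2 + -(α 2 : ℝ) / 2) by ring, exp_add, exp_add]
  simp only [powGaussPeak]
  ring

lemma abs_pow_mul_exp_le_powGaussPeak (n : ℕ) (t : ℝ) :
    |t| ^ n * exp (-(t ^ 2 / 4)) ≤ powGaussPeak n := by
  rcases Nat.eq_zero_or_pos n with rfl | hn
  · simp [powGaussPeak]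
    positivity
  rcases eq_or_ne t 0 with rfl | ht
  · simp [zero_pow hn.ne', powGaussPeak]
    positivity
  have ht2 : 0 < t ^ 2 := by positivity
  have h2n : (0 : ℝ) < 2 * n := by positivity
  have hlhs : |t| ^ n = exp ((n : ℝ) / 2 * log (t ^ 2)) := by
    rw [← exp_log (pow_pos (abs_pos.2 ht) n), log_pow, ← sq_abs t, log_pow]
    push_cast
    ring_nf
  have hrhs : powGaussPeak n = exp ((n : ℝ) / 2 * log (2 * n) - (n : ℝ) / 2) := by
    rw [powGaussPeak, rpow_def_of_pos h2n, ← exp_add]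
    ring_nf
  rw [hlhs, hrhs, ← exp_add, exp_le_exp]
  have key : log (t ^ 2) - log (2 * n) ≤ t ^ 2 / (2 * n) - 1 := by
    rw [← log_div ht2.ne' h2n.ne']
    exact log_le_sub_one_of_pos (by positivity)
  have e : (n : ℝ) / 2 * (t ^ 2 / (2 * n) - 1) = t ^ 2 / 4 - n / 2 := by
    field_simp
    ring
  nlinarith [mul_le_mul_of_nonneg_left key (by positivity : (0 : ℝ) ≤ n / 2)]

lemma one_half_le_powGaussPeak (n : ℕ) : 1 / 2 ≤ powGaussPeak n := by
  have h := abs_pow_mul_exp_le_powGaussPeak n 1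
  have := add_one_le_exp (-(1 / 4 : ℝ))
  norm_num at h this ⊢
  linarith

lemma powGaussPeak_pos (n : ℕ) : 0 < powGaussPeak n :=
  one_half_le_powGaussPeak n |>.trans_lt' (by norm_num)

lemma Aα_pos (α : Fin 3 → ℕ) : 0 < Aα α := by
  rw [Aα_eq_prod_powGaussPeak]
  exact mul_pos (mul_pos (powGaussPeak_pos _) (powGaussPeak_pos _)) (powGaussPeak_pos _)

def gaussWeight (n : ℕ) (t : ℝ) : ℝ := |t| ^ n * exp (-(t ^ 2 / 3))

lemma gaussWeight_nonneg (n : ℕ) (t : ℝ) : 0 ≤ gaussWeight n t := by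
  unfold gaussWeight
  positivity

lemma gaussWeight_le (n : ℕ) (t : ℝ) :
    gaussWeight n t ≤ powGaussPeak n * exp (-(t ^ 2 / 12)) := by
  rw [gaussWeight, show -(t ^ 2 / 3) = -(t ^ 2 / 4) + -(t ^ 2 / 12) by ring, exp_add, ← mul_assoc]
  gcongr
  exact abs_pow_mul_exp_le_powGaussPeak n t

lemma integrable_exp_neg_sq_div_twelve : Integrable fun t : ℝ => exp (-(t ^ 2 / 12)) := by
  simpa [neg_div, div_eq_inv_mul] using integrable_exp_neg_mul_sq (b := 1 / 12) (by norm_num)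

lemma integral_exp_neg_sq_div_twelve : ∫ t : ℝ, exp (-(t ^ 2 / 12)) = √(12 * π) := by
  have := integral_gaussian (1 / 12)
  simp only [neg_mul, one_div, div_inv_eq_mul] at this
  simpa [div_eq_inv_mul, mul_comm] using this

lemma integrable_gaussWeight (n : ℕ) : Integrable (gaussWeight n) := by
  refine (integrable_exp_neg_sq_div_twelve.const_mul (powGaussPeak n)).mono' (by
    unfold gaussWeight; fun_prop) (ae_of_all _ fun t => ?_)
  rw [norm_of_nonneg (gaussWeight_nonneg n t)]
  exact gaussWeight_le n t

lemma integral_gaussWeight_le (n : ℕ) : ∫ t, gaussWeight n t ≤ √(12 * π) * powGaussPeak n := by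
  calc ∫ t, gaussWeight n t ≤ ∫ t, powGaussPeak n * exp (-(t ^ 2 / 12)) :=
        integral_mono (integrable_gaussWeight n)
          (integrable_exp_neg_sq_div_twelve.const_mul _) (gaussWeight_le n)
    _ = √(12 * π) * powGaussPeak n := by
        rw [integral_const_mul, integral_exp_neg_sq_div_twelve, mul_comm]

/-- With `c = ν₀ x` and `t = ζ₁`, this dominates the factor `|ζ₁|⁻¹ e^{-ν(ζ) x/|ζ₁|}` of the
boundary term. -/
def attenuation (c t : ℝ) : ℝ := t⁻¹ * exp (-(c / t))

lemma measurable_attenuation (c : ℝ) : Measurable (attenuation c) := by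
  unfold attenuation
  fun_prop

lemma attenuation_nonneg (c : ℝ) {t : ℝ} (ht : 0 ≤ t) : 0 ≤ attenuation c t := by
  unfold attenuation
  positivity

lemma attenuation_le_inv_self {c t : ℝ} (hc : 0 ≤ c) (ht : 0 < t) : attenuation c t ≤ t⁻¹ :=
  mul_le_of_le_one_right (inv_nonneg.2 ht.le) (exp_le_one_iff.2 (by have := div_nonneg hc ht.le; linarith))

lemma attenuation_le_inv {c t : ℝ} (hc : 0 < c) (ht : 0 < t) : attenuation c t ≤ c⁻¹ := by
  have hct : 0 < c / t := div_pos hc ht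
  have h : exp (-(c / t)) ≤ (c / t)⁻¹ := by
    rw [exp_neg]
    exact inv_anti₀ hct (by linarith [add_one_le_exp (c / t)])
  calc attenuation c t ≤ t⁻¹ * (c / t)⁻¹ := mul_le_mul_of_nonneg_left h (inv_nonneg.2 ht.le)
    _ = c⁻¹ := by field_simp

lemma integrableOn_attenuation {c : ℝ} (hc : 0 < c) {a b : ℝ} (ha : 0 ≤ a) :
    IntegrableOn (attenuation c) (Ioc a b) :=
  Measure.integrableOn_of_bounded (M := c⁻¹) measure_Ioc_lt_top.ne
    (measurable_attenuation c).aestronglyMeasurable <|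
    (ae_restrict_iff' measurableSet_Ioc).2 <| ae_of_all _ fun t ht => by
      have ht0 : 0 < t := ha.trans_lt ht.1
      rw [norm_of_nonneg (attenuation_nonneg c ht0.le)]
      exact attenuation_le_inv hc ht0

/-- Below `t = c` use the bound `c⁻¹`, above it the bound `t⁻¹`, whose integral is `-log c`. -/
lemma setIntegral_Ioc_attenuation_le {c : ℝ} (hc : 0 < c) :
    ∫ t in Ioc 0 1, attenuation c t ≤ |log c| + 1 := by
  set m := min c 1
  have hm0 : 0 < m := lt_min hc one_pos
  have hm1 : m ≤ 1 := min_le_right _ _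
  rw [← Ioc_union_Ioc_eq_Ioc hm0.le hm1, setIntegral_union (Ioc_disjoint_Ioc_of_le le_rfl)
    measurableSet_Ioc (integrableOn_attenuation hc le_rfl) (integrableOn_attenuation hc hm0.le)]
  have hlow : ∫ t in Ioc 0 m, attenuation c t ≤ 1 := by
    calc ∫ t in Ioc 0 m, attenuation c t ≤ ∫ _ in Ioc 0 m, c⁻¹ :=
          setIntegral_mono_on (integrableOn_attenuation hc le_rfl) (integrableOn_const
            measure_Ioc_lt_top.ne) measurableSet_Ioc fun t ht => attenuation_le_inv hc ht.1
      _ = m * c⁻¹ := by simp [hm0.le]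
      _ ≤ c * c⁻¹ := by gcongr; exact min_le_left _ _
      _ = 1 := mul_inv_cancel₀ hc.ne'
  have hhigh : ∫ t in Ioc m 1, attenuation c t ≤ |log c| := by
    calc ∫ t in Ioc m 1, attenuation c t ≤ ∫ t in Ioc m 1, t⁻¹ := by
          refine setIntegral_mono_on (integrableOn_attenuation hc hm0.le) ?_ measurableSet_Ioc
            fun t ht => attenuation_le_inv_self hc.le (hm0.trans ht.1)
          rw [← intervalIntegrable_iff_integrableOn_Ioc_of_le hm1]
          refine intervalIntegral.intervalIntegrable_inv (fun t ht => ?_) continuousOn_id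
          rw [uIcc_of_le hm1] at ht
          exact (hm0.trans_le ht.1).ne'
      _ = -log m := by
          rw [← intervalIntegral.integral_of_le hm1, integral_inv_of_pos hm0 one_pos, one_div,
            log_inv]
      _ ≤ |log c| := by
          rcases le_total c 1 with h | h
          · simp only [m, min_eq_left h]
            exact neg_le_abs _
          · simp [m, min_eq_right h]
  linarith

lemma integrableOn_gaussWeight_mul_attenuation (n : ℕ) {c : ℝ} (hc : 0 < c) :
    IntegrableOn (fun t => gaussWeight n t * attenuation c t) (Ioi 0) := by
  refine ((integrable_gaussWeight n).mul_const c⁻¹).integrableOn.mono'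
    (((integrable_gaussWeight n).aestronglyMeasurable.mul
      (measurable_attenuation c).aestronglyMeasurable).restrict) ?_
  refine (ae_restrict_iff' measurableSet_Ioi).2 (ae_of_all _ fun t (ht : 0 < t) => ?_)
  rw [norm_of_nonneg (mul_nonneg (gaussWeight_nonneg n t) (attenuation_nonneg c ht.le))]
  exact mul_le_mul_of_nonneg_left (attenuation_le_inv hc ht) (gaussWeight_nonneg n t)

lemma setIntegral_gaussWeight_mul_attenuation_le (n : ℕ) {c : ℝ} (hc : 0 < c) :
    ∫ t in Ioi 0, gaussWeight n t * attenuation c t ≤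
      (2 * (|log c| + 1) + √(12 * π)) * powGaussPeak n := by
  have hint := integrableOn_gaussWeight_mul_attenuation n hc
  rw [← Ioc_union_Ioi_eq_Ioi zero_le_one, setIntegral_union Ioc_disjoint_Ioi_same
    measurableSet_Ioi (hint.mono_set Ioc_subset_Ioi_self) (hint.mono_set (Ioi_subset_Ioi zero_le_one))]
  have hnear : ∫ t in Ioc 0 1, gaussWeight n t * attenuation c t ≤ |log c| + 1 := by
    refine le_trans (setIntegral_mono_on (hint.mono_set Ioc_subset_Ioi_self)
      (integrableOn_attenuation hc le_rfl) measurableSet_Ioc fun t ht => ?_)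
      (setIntegral_Ioc_attenuation_le hc)
    have hw : gaussWeight n t ≤ 1 := by
      rw [gaussWeight, abs_of_pos ht.1]
      exact mul_le_one₀ (pow_le_one₀ ht.1.le ht.2) (exp_pos _).le
        (exp_le_one_iff.2 (by have := sq_nonneg t; linarith))
    exact mul_le_of_le_one_left (attenuation_nonneg c ht.1.le) hw
  have hfar : ∫ t in Ioi 1, gaussWeight n t * attenuation c t ≤ √(12 * π) * powGaussPeak n := by
    refine le_trans (setIntegral_mono_on (hint.mono_set (Ioi_subset_Ioi zero_le_one))
      (integrable_gaussWeight n).integrableOn measurableSet_Ioi fun t (ht : 1 < t) => ?_)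
      ((setIntegral_le_integral (integrable_gaussWeight n)
        (ae_of_all _ (gaussWeight_nonneg n))).trans (integral_gaussWeight_le n))
    refine mul_le_of_le_one_right (gaussWeight_nonneg n t) ?_
    calc attenuation c t ≤ t⁻¹ := attenuation_le_inv_self hc.le (one_pos.trans ht)
      _ ≤ 1 := inv_le_one_of_one_le₀ ht.le
  have hpeak := one_half_le_powGaussPeak n
  nlinarith [abs_nonneg (log c), sqrt_nonneg (12 * π)]

lemma one_add_le_two_mul_exp_sq_div_six (r : ℝ) : 1 + r ≤ 2 * exp (r ^ 2 / 6) := by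
  nlinarith [add_one_le_exp (r ^ 2 / 6), sq_nonneg (r - 3 / 2)]

lemma enr_nonneg (ζ : Fin 3 → ℝ) : 0 ≤ enr ζ := sqrt_nonneg _

lemma abs_phiα_mul_one_add_enr_le (α : Fin 3 → ℕ) (ζ : Fin 3 → ℝ) :
    |phiα α ζ| * (1 + enr ζ) ≤
      2 * (gaussWeight (α 0) (ζ 0) * gaussWeight (α 1) (ζ 1) * gaussWeight (α 2) (ζ 2)) := by
  have hr : enr ζ ^ 2 = ζ 0 ^ 2 + ζ 1 ^ 2 + ζ 2 ^ 2 := sq_sqrt (by positivity)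
  have hr0 := enr_nonneg ζ
  have hπ : π ^ (-(3 : ℝ) / 4) ≤ 1 :=
    rpow_le_one_of_one_le_of_nonpos (by linarith [pi_gt_three]) (by norm_num)
  have hgauss : exp (-enr ζ ^ 2 / 2) * (1 + enr ζ) ≤
      2 * (exp (-(ζ 0 ^ 2 / 3)) * exp (-(ζ 1 ^ 2 / 3)) * exp (-(ζ 2 ^ 2 / 3))) := by
    calc exp (-enr ζ ^ 2 / 2) * (1 + enr ζ)
        ≤ exp (-enr ζ ^ 2 / 2) * (2 * exp (enr ζ ^ 2 / 6)) := by
          gcongr; exact one_add_le_two_mul_exp_sq_div_six _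
      _ = _ := by
          rw [mul_left_comm, ← exp_add, ← exp_add, ← exp_add]
          congr 2
          linear_combination (-1 / 3 : ℝ) * hr
  calc |phiα α ζ| * (1 + enr ζ)
      = π ^ (-(3 : ℝ) / 4) * (|ζ 0| ^ α 0 * |ζ 1| ^ α 1 * |ζ 2| ^ α 2) *
          (exp (-enr ζ ^ 2 / 2) * (1 + enr ζ)) := by
        simp only [phiα, abs_mul, abs_pow, abs_of_pos (exp_pos _),
          abs_of_pos (rpow_pos_of_pos pi_pos _)]
        ring
    _ ≤ 1 * (|ζ 0| ^ α 0 * |ζ 1| ^ α 1 * |ζ 2| ^ α 2) *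
          (2 * (exp (-(ζ 0 ^ 2 / 3)) * exp (-(ζ 1 ^ 2 / 3)) * exp (-(ζ 2 ^ 2 / 3)))) := by
        gcongr
    _ = _ := by
        simp only [gaussWeight]
        ring

lemma abs_boundaryIntegrand_le (α : Fin 3 → ℕ) {ζ : Fin 3 → ℝ} {v x c L D : ℝ}
    (hζ : 0 < ζ 0) (hc : c ≤ v * x) (hL : |L| ≤ D * (1 + enr ζ)) :
    |phiα α ζ * (1 / |ζ 0|) * exp (-(v * x) / |ζ 0|) * L| ≤
      2 * D * (gaussWeight (α 0) (ζ 0) * attenuation c (ζ 0) * gaussWeight (α 1) (ζ 1) *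
        gaussWeight (α 2) (ζ 2)) := by
  have hD : 0 ≤ D :=
    nonneg_of_mul_nonneg_left ((abs_nonneg L).trans hL) (by linarith [enr_nonneg ζ])
  have hatt : (1 / |ζ 0|) * exp (-(v * x) / |ζ 0|) ≤ attenuation c (ζ 0) := by
    rw [abs_of_pos hζ, attenuation, one_div, neg_div]
    gcongr
  calc |phiα α ζ * (1 / |ζ 0|) * exp (-(v * x) / |ζ 0|) * L|
      = |phiα α ζ| * ((1 / |ζ 0|) * exp (-(v * x) / |ζ 0|)) * |L| := by
        rw [abs_mul, abs_mul, abs_mul, abs_of_nonneg (by positivity : 0 ≤ 1 / |ζ 0|),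
          abs_of_pos (exp_pos _)]
        ring
    _ ≤ |phiα α ζ| * attenuation c (ζ 0) * (D * (1 + enr ζ)) := by
        have := attenuation_nonneg c hζ.le
        gcongr
    _ = D * attenuation c (ζ 0) * (|phiα α ζ| * (1 + enr ζ)) := by ring
    _ ≤ D * attenuation c (ζ 0) *
          (2 * (gaussWeight (α 0) (ζ 0) * gaussWeight (α 1) (ζ 1) * gaussWeight (α 2) (ζ 2))) := by
        exact mul_le_mul_of_nonneg_left (abs_phiα_mul_one_add_enr_le α ζ)
          (mul_nonneg hD (attenuation_nonneg c hζ.le))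
    _ = _ := by ring

lemma integrable_prod_three {f₀ f₁ f₂ : ℝ → ℝ} (h₀ : Integrable f₀) (h₁ : Integrable f₁)
    (h₂ : Integrable f₂) :
    Integrable fun ζ : Fin 3 → ℝ => f₀ (ζ 0) * f₁ (ζ 1) * f₂ (ζ 2) := by
  have := Integrable.fintype_prod (f := ![f₀, f₁, f₂]) (μ := fun _ => volume)
    (fun i => by fin_cases i <;> assumption)
  simpa [Fin.prod_univ_three, volume_pi] using this

lemma integral_prod_three (f₀ f₁ f₂ : ℝ → ℝ) :
    ∫ ζ : Fin 3 → ℝ, f₀ (ζ 0) * f₁ (ζ 1) * f₂ (ζ 2) =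
      (∫ t, f₀ t) * (∫ t, f₁ t) * ∫ t, f₂ t := by
  simpa [Fin.prod_univ_three] using integral_fintype_prod_volume_eq_prod ![f₀, f₁, f₂]

lemma abs_setIntegral_boundaryIntegrand_le (α : Fin 3 → ℕ) {ν L : (Fin 3 → ℝ) → ℝ}
    {x c D : ℝ} (hc : 0 < c) (hcν : ∀ ζ, c ≤ ν ζ * x)
    (hL : ∀ ζ : Fin 3 → ℝ, 0 < ζ 0 → |L ζ| ≤ D * (1 + enr ζ)) :
    |∫ ζ in {ζ : Fin 3 → ℝ | 0 < ζ 0}, phiα α ζ * (1 / |ζ 0|) *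
        exp (-(ν ζ * x) / |ζ 0|) * L ζ| ≤
      2 * D * (2 * (|log c| + 1) + √(12 * π)) * (12 * π) * Aα α := by
  have hD : 0 ≤ D := nonneg_of_mul_nonneg_left ((abs_nonneg _).trans (hL (fun _ => 1) one_pos))
    (by linarith [enr_nonneg fun _ => 1])
  set F₀ := (Ioi 0).indicator fun t => gaussWeight (α 0) t * attenuation c t
  have hF₀ : Integrable F₀ :=
    (integrable_indicator_iff measurableSet_Ioi).2 (integrableOn_gaussWeight_mul_attenuation _ hc)
  have hF₀_nonneg : ∀ t, 0 ≤ F₀ t := indicator_nonneg fun t (ht : 0 < t) =>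
    mul_nonneg (gaussWeight_nonneg _ t) (attenuation_nonneg c ht.le)
  set G := fun ζ : Fin 3 → ℝ => F₀ (ζ 0) * gaussWeight (α 1) (ζ 1) * gaussWeight (α 2) (ζ 2)
  have hG : Integrable G :=
    integrable_prod_three hF₀ (integrable_gaussWeight _) (integrable_gaussWeight _)
  have hpt : ∀ ζ ∈ {ζ : Fin 3 → ℝ | 0 < ζ 0},
      |phiα α ζ * (1 / |ζ 0|) * exp (-(ν ζ * x) / |ζ 0|) * L ζ| ≤ 2 * D * G ζ := fun ζ hζ => by
    simpa [G, F₀, indicator_of_mem (show ζ 0 ∈ Ioi 0 from hζ)] using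
      abs_boundaryIntegrand_le α hζ (hcν ζ) (hL ζ hζ)
  calc _ ≤ ∫ ζ in {ζ : Fin 3 → ℝ | 0 < ζ 0}, |phiα α ζ * (1 / |ζ 0|) *
          exp (-(ν ζ * x) / |ζ 0|) * L ζ| := abs_integral_le_integral_abs
    _ ≤ ∫ ζ in {ζ : Fin 3 → ℝ | 0 < ζ 0}, 2 * D * G ζ :=
        integral_mono_of_nonneg (ae_of_all _ fun _ => abs_nonneg _) (hG.const_mul _).restrict
          ((ae_restrict_iff' (measurableSet_lt measurable_const (measurable_pi_apply 0))).2
            (ae_of_all _ hpt))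
    _ ≤ ∫ ζ, 2 * D * G ζ := setIntegral_le_integral (hG.const_mul _) <| ae_of_all _ fun ζ =>
        mul_nonneg (by positivity) <| mul_nonneg (mul_nonneg (hF₀_nonneg _)
          (gaussWeight_nonneg _ _)) (gaussWeight_nonneg _ _)
    _ = 2 * D * ((∫ t, F₀ t) * (∫ t, gaussWeight (α 1) t) * ∫ t, gaussWeight (α 2) t) := by
        rw [integral_const_mul, integral_prod_three]
    _ ≤ 2 * D * ((2 * (|log c| + 1) + √(12 * π)) * powGaussPeak (α 0) *
          (√(12 * π) * powGaussPeak (α 1)) * (√(12 * π) * powGaussPeak (α 2))) := by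
        have h₀ : ∫ t, F₀ t ≤ (2 * (|log c| + 1) + √(12 * π)) * powGaussPeak (α 0) := by
          rw [integral_indicator measurableSet_Ioi]
          exact setIntegral_gaussWeight_mul_attenuation_le (α 0) hc
        have n₀ : 0 ≤ ∫ t, F₀ t := integral_nonneg hF₀_nonneg
        have n₁ : 0 ≤ ∫ t, gaussWeight (α 1) t := integral_nonneg (gaussWeight_nonneg _)
        have n₂ : 0 ≤ ∫ t, gaussWeight (α 2) t := integral_nonneg (gaussWeight_nonneg _)
        have h₁ := integral_gaussWeight_le (α 1)
        have h₂ := integral_gaussWeight_le (α 2)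
        exact mul_le_mul_of_nonneg_left (mul_le_mul (mul_le_mul h₀ h₁ n₁ (n₀.trans h₀)) h₂ n₂
          (mul_nonneg (n₀.trans h₀) (n₁.trans h₁))) (by positivity)
    _ = _ := by
        rw [Aα_eq_prod_powGaussPeak]
        linear_combination (2 * D * (2 * (|log c| + 1) + √(12 * π)) * powGaussPeak (α 0) *
          powGaussPeak (α 1) * powGaussPeak (α 2)) * mul_self_sqrt (by positivity : 0 ≤ 12 * π)

lemma memLp_two_and_toReal_eLpNorm_le_of_weighted {X : Type*} [MeasurableSpace X]
    {μ : Measure X} {g w : X → ℝ} {c M : ℝ} (hc : 0 < c) (hw : ∀ a, c ≤ w a)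
    (hg : AEStronglyMeasurable g μ) (hint : Integrable (fun a => g a ^ 2 * w a) μ)
    (hM : √(∫ a, g a ^ 2 * w a ∂μ) ≤ M) :
    MemLp g 2 μ ∧ (eLpNorm g 2 μ).toReal ≤ M / √c := by
  have hpt : ∀ a, g a ^ 2 ≤ c⁻¹ * (g a ^ 2 * w a) := fun a => by
    rw [le_inv_mul_iff₀ hc]
    nlinarith [hw a, sq_nonneg (g a)]
  have hsq : Integrable (fun a => g a ^ 2) μ :=
    (hint.const_mul c⁻¹).mono' (hg.pow 2) (ae_of_all _ fun a => by
      rw [norm_of_nonneg (sq_nonneg _)]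
      exact hpt a)
  refine ⟨(memLp_two_iff_integrable_sq hg).2 hsq, ?_⟩
  have hnorm : (eLpNorm g 2 μ).toReal = √(∫ a, g a ^ 2 ∂μ) := by
    rw [toReal_eLpNorm hg, lpNorm_eq_integral_norm_rpow_toReal (by norm_num) (by norm_num) hg,
      sqrt_eq_rpow]
    simp
  calc (eLpNorm g 2 μ).toReal ≤ √(c⁻¹ * ∫ a, g a ^ 2 * w a ∂μ) := by
        rw [hnorm, ← integral_const_mul]
        exact sqrt_le_sqrt (integral_mono hsq (hint.const_mul _) hpt)
    _ = √(∫ a, g a ^ 2 * w a ∂μ) / √c := by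
        rw [sqrt_mul (inv_nonneg.2 hc.le), sqrt_inv, inv_mul_eq_div]
    _ ≤ M / √c := by gcongr

lemma abs_neg_mul_add_Kop_le {γ ν₁ C₀ M N : ℝ} {ν : (Fin 3 → ℝ) → ℝ}
    {k : (Fin 3 → ℝ) → (Fin 3 → ℝ) → ℝ} {g : (Fin 3 → ℝ) → ℝ} (hν₁ : 0 ≤ ν₁) (hγ1 : γ ≤ 1)
    (hν : ∀ ζ, 0 ≤ ν ζ ∧ ν ζ ≤ ν₁ * (1 + enr ζ) ^ γ)
    (hK : ∀ ζ, (1 + enr ζ) ^ ((3 : ℝ) / 2 - γ) * |Kop k g ζ| ≤ C₀ * (eLpNorm g 2 volume).toReal)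
    (hN : (eLpNorm g 2 volume).toReal ≤ N) {ζ : Fin 3 → ℝ} (hM : |g ζ| ≤ M) :
    |-(ν ζ) * g ζ + Kop k g ζ| ≤ (ν₁ * M + |C₀| * N) * (1 + enr ζ) := by
  have hr : 1 ≤ 1 + enr ζ := le_add_of_nonneg_right (enr_nonneg ζ)
  have hνζ : ν ζ ≤ ν₁ * (1 + enr ζ) :=
    calc ν ζ ≤ ν₁ * (1 + enr ζ) ^ γ := (hν ζ).2
      _ ≤ ν₁ * (1 + enr ζ) := by
        gcongr
        exact (rpow_le_rpow_of_exponent_le hr hγ1).trans_eq (rpow_one _)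
  have hKζ : |Kop k g ζ| ≤ |C₀| * N :=
    calc |Kop k g ζ| ≤ (1 + enr ζ) ^ ((3 : ℝ) / 2 - γ) * |Kop k g ζ| :=
          le_mul_of_one_le_left (abs_nonneg _) (one_le_rpow hr (by linarith))
      _ ≤ C₀ * (eLpNorm g 2 volume).toReal := hK ζ
      _ ≤ |C₀| * N := by gcongr; exact le_abs_self _
  calc |-(ν ζ) * g ζ + Kop k g ζ| ≤ ν ζ * |g ζ| + |Kop k g ζ| := by
        simpa [abs_mul, abs_of_nonneg (hν ζ).1] using abs_add_le (-(ν ζ) * g ζ) (Kop k g ζ)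
    _ ≤ ν₁ * (1 + enr ζ) * M + |C₀| * N * (1 + enr ζ) := by
        have hN₀ : 0 ≤ N := ENNReal.toReal_nonneg.trans hN
        gcongr
        exact hKζ.trans (le_mul_of_one_le_right (by positivity) hr)
    _ = (ν₁ * M + |C₀| * N) * (1 + enr ζ) := by ring

lemma boundary_constant_le {ν₀ ν₁ C₀ M₁ M₂ M₃ x A : ℝ} (hν₀ : 0 < ν₀) (hν₁ : 0 ≤ ν₁)
    (hx : 0 < x) (hM₁ : 0 ≤ M₁) (hM₂ : 0 ≤ M₂) (hM₃ : 0 ≤ M₃) (hA : 0 ≤ A) :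
    2 * (ν₁ * M₂ + |C₀| * (M₁ / √ν₀)) * (2 * (|log (ν₀ * x)| + 1) + √(12 * π)) *
        (12 * π) * A ≤
      2 * (ν₁ + |C₀| / √ν₀) * (2 * (|log ν₀| + 1) + √(12 * π)) * (12 * π) *
        (|log x| + 1) * A * (M₁ + M₂ + M₃) := by
  have hD : ν₁ * M₂ + |C₀| * (M₁ / √ν₀) ≤ (ν₁ + |C₀| / √ν₀) * (M₁ + M₂ + M₃) := by
    have hC : 0 ≤ |C₀| / √ν₀ := by positivity
    rw [mul_div_left_comm]
    nlinarith [mul_nonneg hν₁ hM₁, mul_nonneg hν₁ hM₃, mul_nonneg hC hM₂, mul_nonneg hC hM₃]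
  have hlog : 2 * (|log (ν₀ * x)| + 1) + √(12 * π) ≤
      (2 * (|log ν₀| + 1) + √(12 * π)) * (|log x| + 1) := by
    rw [log_mul hν₀.ne' hx.ne']
    nlinarith [abs_add_le (log ν₀) (log x), abs_nonneg (log ν₀), abs_nonneg (log x),
      sqrt_nonneg (12 * π)]
  calc _ ≤ 2 * ((ν₁ + |C₀| / √ν₀) * (M₁ + M₂ + M₃)) *
        ((2 * (|log ν₀| + 1) + √(12 * π)) * (|log x| + 1)) * (12 * π) * A := by
        gcongr
    _ = _ := by ring

theorem stmt1_general (γ ν₀ ν₁ C₀ l : ℝ) (Ca : ℝ → ℝ) (hγ0 : 0 < γ) (hγ1 : γ ≤ 1) (hν₀ : 0 < ν₀)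
    (hν₀₁ : ν₀ < ν₁) :
    ∃ C > (0 : ℝ),
      ∀ (ν : (Fin 3 → ℝ) → ℝ) (k : (Fin 3 → ℝ) → (Fin 3 → ℝ) → ℝ),
        Measurable ν → Measurable (Function.uncurry k) →
        (∀ ζ, ν₀ * (1 + enr ζ) ^ γ ≤ ν ζ ∧ ν ζ ≤ ν₁ * (1 + enr ζ) ^ γ) →
        (∀ g : (Fin 3 → ℝ) → ℝ, MemLp g 2 volume → ∀ ζ,
          (1 + enr ζ) ^ ((3 : ℝ) / 2 - γ) * |Kop k g ζ| ≤ C₀ * (eLpNorm g 2 volume).toReal) →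
        (∀ a : ℝ, 0 ≤ a → ∀ (g : (Fin 3 → ℝ) → ℝ) (M : ℝ),
          (∀ ζ, (1 + enr ζ) ^ a * |g ζ| ≤ M) →
          ∀ ζ, (1 + enr ζ) ^ (2 + a - γ) * |Kop k g ζ| ≤ Ca a * M) →
        ∀ (f : ℝ → (Fin 3 → ℝ) → ℝ) (M₁ M₂ M₃ : ℝ), Measurable (Function.uncurry f) →
          MildSolution l ν k f →
          (∀ x ∈ Icc (0 : ℝ) l, Integrable (fun ζ => (f x ζ) ^ 2 * ν ζ) volume ∧
            starNorm ν (f x) ≤ M₁) →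
          (∀ ζ : Fin 3 → ℝ, 0 < ζ 0 → |f 0 ζ| ≤ M₂) →
          (∀ ζ : Fin 3 → ℝ, ζ 0 < 0 → |f l ζ| ≤ M₃) →
          ∀ (α : Fin 3 → ℕ) (x : ℝ), 0 < x → x ≤ min l 1 →
            |∫ ζ in {ζ : Fin 3 → ℝ | 0 < ζ 0}, phiα α ζ * (1 / |ζ 0|) *
                Real.exp (-(ν ζ * x) / |ζ 0|) * (-(ν ζ) * f 0 ζ + Kop k (f 0) ζ)| ≤
              C * (|Real.log x| + 1) * Aα α * (M₁ + M₂ + M₃) := by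
  have hν₁ : 0 < ν₁ := hν₀.trans hν₀₁
  refine ⟨2 * (ν₁ + |C₀| / √ν₀) * (2 * (|log ν₀| + 1) + √(12 * π)) * (12 * π), by positivity, ?_⟩
  intro ν k _ _ hν hK _ f M₁ M₂ M₃ hf _ hstar hM₂ hM₃ α x hx hxl
  obtain ⟨hint, hM₁⟩ := hstar 0 ⟨le_rfl, hx.le.trans (hxl.trans (min_le_left _ _))⟩
  have hν₀_le : ∀ ζ, ν₀ ≤ ν ζ := fun ζ => (le_mul_of_one_le_right hν₀.le
    (one_le_rpow (le_add_of_nonneg_right (enr_nonneg ζ)) hγ0.le)).trans (hν ζ).1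
  obtain ⟨hmem, hL2⟩ := memLp_two_and_toReal_eLpNorm_le_of_weighted hν₀ hν₀_le
    (hf.comp (measurable_const.prodMk measurable_id)).aestronglyMeasurable hint hM₁
  refine (abs_setIntegral_boundaryIntegrand_le α (mul_pos hν₀ hx)
    (fun ζ => mul_le_mul_of_nonneg_right (hν₀_le ζ) hx.le) fun ζ hζ =>
      abs_neg_mul_add_Kop_le hν₁.le hγ1 (fun ζ => ⟨hν₀.le.trans (hν₀_le ζ), (hν ζ).2⟩)
        (hK _ hmem) hL2 (hM₂ ζ hζ)).trans ?_
  exact boundary_constant_le hν₀ hν₁.le hx ((sqrt_nonneg _).trans hM₁)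
    ((abs_nonneg _).trans (hM₂ (fun _ => 1) one_pos))
    ((abs_nonneg _).trans (hM₃ (fun _ => -1) (by norm_num))) (Aα_pos α).le

/-- the boundary term bound
|∫_{ζ₁>0} φ_α |ζ₁|⁻¹ e^{-ν x/|ζ₁|} L(f)(0,ζ) dζ| ≤ C (|ln x|+1) A_α ⟨f⟩,
where L(f)(0,·) = -ν f(0,·) + K(f)(0,·) and ⟨f⟩ is encoded by the bounds M₁, M₂, M₃. -/
theorem stmt1 (γ ν₀ ν₁ C₀ l : ℝ) (Ca : ℝ → ℝ) (hγ0 : 0 < γ) (hγ1 : γ ≤ 1) (hν₀ : 0 < ν₀)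
    (hν₀₁ : ν₀ < ν₁) (hl : 0 < l) :
    ∃ C > (0 : ℝ),
      ∀ (ν : (Fin 3 → ℝ) → ℝ) (k : (Fin 3 → ℝ) → (Fin 3 → ℝ) → ℝ),
        Measurable ν → Measurable (Function.uncurry k) →
        (∀ ζ, ν₀ * (1 + enr ζ) ^ γ ≤ ν ζ ∧ ν ζ ≤ ν₁ * (1 + enr ζ) ^ γ) →
        (∀ g : (Fin 3 → ℝ) → ℝ, MemLp g 2 volume → ∀ ζ,
          (1 + enr ζ) ^ ((3 : ℝ) / 2 - γ) * |Kop k g ζ| ≤ C₀ * (eLpNorm g 2 volume).toReal) →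
        (∀ a : ℝ, 0 ≤ a → ∀ (g : (Fin 3 → ℝ) → ℝ) (M : ℝ),
          (∀ ζ, (1 + enr ζ) ^ a * |g ζ| ≤ M) →
          ∀ ζ, (1 + enr ζ) ^ (2 + a - γ) * |Kop k g ζ| ≤ Ca a * M) →
        ∀ (f : ℝ → (Fin 3 → ℝ) → ℝ) (M₁ M₂ M₃ : ℝ), Measurable (Function.uncurry f) →
          MildSolution l ν k f →
          (∀ x ∈ Icc (0 : ℝ) l, Integrable (fun ζ => (f x ζ) ^ 2 * ν ζ) volume ∧
            starNorm ν (f x) ≤ M₁) →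
          (∀ ζ : Fin 3 → ℝ, 0 < ζ 0 → |f 0 ζ| ≤ M₂) →
          (∀ ζ : Fin 3 → ℝ, ζ 0 < 0 → |f l ζ| ≤ M₃) →
          ∀ (α : Fin 3 → ℕ) (x : ℝ), 0 < x → x ≤ min l 1 →
            |∫ ζ in {ζ : Fin 3 → ℝ | 0 < ζ 0}, phiα α ζ * (1 / |ζ 0|) *
                Real.exp (-(ν ζ * x) / |ζ 0|) * (-(ν ζ) * f 0 ζ + Kop k (f 0) ζ)| ≤
              C * (|Real.log x| + 1) * Aα α * (M₁ + M₂ + M₃) :=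
  stmt1_general γ ν₀ ν₁ C₀ l Ca hγ0 hγ1 hν₀ hν₀₁
end
end

section
/- Let f be a mild solution of ζ₁∂ₓf = −ν f + K(f) on [0,l] with ⟨f⟩ < ∞. Then there is a constant C, depending only on ν₀, γ and the constant C₀ in the hypothesis ‖K(g)‖_{L^∞_{3/2−γ}} ≤ C₀‖g‖_{L²}, such that sup_{0≤x≤l, ζ∈ℝ³} |f(x,ζ)| ≤ C ⟨f⟩. -/
open MeasureTheory Real Set

noncomputable section

/-! Since `ν ≥ ν₀`, the star norm controls the `L²` norm: `‖f(s)‖_{L²} ≤ |||f||| / √ν₀`. Trading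
the weight `(1+|ζ|)^{3/2-γ}` in the bound on `K` for `(1+|ζ|)^γ ≤ ν(ζ)/ν₀` then gives
`|K(f)(s,ζ)| ≤ |C₀| ν₀^{-3/2} |||f||| ν(ζ)`. In the mild formulation the boundary term is damped by
a factor `≤ 1`, and the Duhamel kernel `|ζ₁|⁻¹ e^{-ν(ζ)t/|ζ₁|}` has total mass at most `1/ν(ζ)`,
which absorbs the factor `ν(ζ)`. -/

lemma integral_exp_decay_le {a c : ℝ} (ha : 0 < a) (hc : 0 < c) (T : ℝ) :
    ∫ u in (0 : ℝ)..T, (1 / c) * Real.exp (-(a * u) / c) ≤ 1 / a := by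
  have hderiv : ∀ u : ℝ, HasDerivAt (fun u => -(1 / a) * Real.exp (-(a * u) / c))
      ((1 / c) * Real.exp (-(a * u) / c)) u := by
    intro u
    have hlin : HasDerivAt (fun u : ℝ => -(a * u) / c) (-(a * 1) / c) u :=
      ((hasDerivAt_id' u).const_mul a).neg.div_const c
    refine ((hlin.exp).const_mul (-(1 / a))).congr_deriv ?_
    field_simp
  rw [intervalIntegral.integral_eq_sub_of_hasDerivAt (fun u _ => hderiv u)
    ((by fun_prop : Continuous fun u : ℝ => (1 / c) * Real.exp (-(a * u) / c)).intervalIntegrable _ _)]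
  have hpos : 0 < 1 / a * Real.exp (-(a * T) / c) := by positivity
  simp only [mul_zero, neg_zero, zero_div, Real.exp_zero]
  linarith

lemma integral_exp_decay_sub_left_le {a c : ℝ} (ha : 0 < a) (hc : 0 < c) (x : ℝ) :
    ∫ s in (0 : ℝ)..x, (1 / c) * Real.exp (-(a * (x - s)) / c) ≤ 1 / a := by
  rw [intervalIntegral.integral_comp_sub_left (fun u => (1 / c) * Real.exp (-(a * u) / c)) x,
    sub_self, sub_zero]
  exact integral_exp_decay_le ha hc x

lemma integral_exp_decay_sub_right_le {a c : ℝ} (ha : 0 < a) (hc : 0 < c) (x l : ℝ) :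
    ∫ s in x..l, (1 / c) * Real.exp (-(a * (s - x)) / c) ≤ 1 / a := by
  rw [intervalIntegral.integral_comp_sub_right (fun u => (1 / c) * Real.exp (-(a * u) / c)) x,
    sub_self]
  exact integral_exp_decay_le ha hc (l - x)

lemma abs_integral_mul_le_of_integral_le {a b ν β : ℝ} (hab : a ≤ b) (hν : 0 < ν)
    {w g : ℝ → ℝ} (hw : Continuous w) (hw₀ : ∀ s, 0 ≤ w s) (hmass : ∫ s in a..b, w s ≤ 1 / ν)
    (hg : ∀ s ∈ Icc a b, |g s| ≤ β * ν) :
    |∫ s in a..b, w s * g s| ≤ β := by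
  have hβν : 0 ≤ β * ν := (abs_nonneg _).trans (hg a ⟨le_rfl, hab⟩)
  have hpt : ∀ᵐ s, s ∈ Ioc a b → ‖w s * g s‖ ≤ w s * (β * ν) := by
    refine ae_of_all _ fun s hs => ?_
    rw [Real.norm_eq_abs, abs_mul, abs_of_nonneg (hw₀ s)]
    exact mul_le_mul_of_nonneg_left (hg s (Ioc_subset_Icc_self hs)) (hw₀ s)
  calc |∫ s in a..b, w s * g s|
      ≤ ∫ s in a..b, w s * (β * ν) :=
        intervalIntegral.norm_integral_le_of_norm_le hab hpt
          ((hw.mul continuous_const).intervalIntegrable _ _)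
    _ = (∫ s in a..b, w s) * (β * ν) := intervalIntegral.integral_mul_const _ _
    _ ≤ 1 / ν * (β * ν) := mul_le_mul_of_nonneg_right hmass hβν
    _ = β := by field_simp

lemma abs_exp_neg_mul_le {t : ℝ} (ht : 0 ≤ t) (y : ℝ) : |Real.exp (-t) * y| ≤ |y| := by
  rw [abs_mul, abs_of_pos (Real.exp_pos _)]
  exact mul_le_of_le_one_left (abs_nonneg y) (Real.exp_le_one_iff.2 (neg_nonpos.2 ht))

section MildSolution

variable {l : ℝ} {ν : (Fin 3 → ℝ) → ℝ} {k : (Fin 3 → ℝ) → (Fin 3 → ℝ) → ℝ}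
  {f : ℝ → (Fin 3 → ℝ) → ℝ} {x β : ℝ} {ζ : Fin 3 → ℝ}

theorem MildSolution.abs_le_of_pos (hf : MildSolution l ν k f) (hν : 0 < ν ζ)
    (hK : ∀ s ∈ Icc 0 l, |Kop k (f s) ζ| ≤ β * ν ζ) (hx : x ∈ Icc 0 l) (hζ : 0 < ζ 0) :
    |f x ζ| ≤ |f 0 ζ| + β := by
  have hc : 0 < |ζ 0| := abs_pos.2 hζ.ne'
  rw [hf.1 x hx ζ hζ, neg_div]
  refine (abs_add_le _ _).trans (add_le_add (abs_exp_neg_mul_le (by positivity [hx.1]) _) ?_)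
  exact abs_integral_mul_le_of_integral_le hx.1 hν (by fun_prop) (fun s => by positivity)
    (integral_exp_decay_sub_left_le hν hc x) fun s hs => hK s ⟨hs.1, hs.2.trans hx.2⟩

theorem MildSolution.abs_le_of_neg (hf : MildSolution l ν k f) (hν : 0 < ν ζ)
    (hK : ∀ s ∈ Icc 0 l, |Kop k (f s) ζ| ≤ β * ν ζ) (hx : x ∈ Icc 0 l) (hζ : ζ 0 < 0) :
    |f x ζ| ≤ |f l ζ| + β := by
  have hc : 0 < |ζ 0| := abs_pos.2 hζ.ne
  rw [hf.2 x hx ζ hζ, neg_div]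
  refine (abs_add_le _ _).trans (add_le_add (abs_exp_neg_mul_le (by positivity [sub_nonneg.2 hx.2]) _) ?_)
  exact abs_integral_mul_le_of_integral_le hx.2 hν (by fun_prop) (fun s => by positivity)
    (integral_exp_decay_sub_right_le hν hc x l) fun s hs => hK s ⟨hx.1.trans hs.1, hs.2⟩

end MildSolution

section WeightedL2

variable {α : Type*} [MeasurableSpace α] {μ : Measure α} {g w : α → ℝ} {w₀ : ℝ}

lemma integrable_sq_of_integrable_sq_mul (hw₀ : 0 < w₀) (hw : ∀ a, w₀ ≤ w a)
    (hg : AEStronglyMeasurable g μ) (hint : Integrable (fun a => g a ^ 2 * w a) μ) :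
    Integrable (fun a => g a ^ 2) μ := by
  refine (hint.div_const w₀).mono' (hg.pow 2) (ae_of_all _ fun a => ?_)
  rw [Real.norm_eq_abs, abs_of_nonneg (sq_nonneg _), le_div_iff₀ hw₀]
  exact mul_le_mul_of_nonneg_left (hw a) (sq_nonneg _)

lemma toReal_eLpNorm_two_le_sqrt_integral_sq_mul (hw₀ : 0 < w₀) (hw : ∀ a, w₀ ≤ w a)
    (hg : MemLp g 2 μ) (hint : Integrable (fun a => g a ^ 2 * w a) μ) :
    (eLpNorm g 2 μ).toReal ≤ Real.sqrt (∫ a, g a ^ 2 * w a ∂μ) / Real.sqrt w₀ := by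
  have hsq : Integrable (fun a => g a ^ 2) μ :=
    integrable_sq_of_integrable_sq_mul hw₀ hw hg.aestronglyMeasurable hint
  have hI : ∫ a, g a ^ 2 ∂μ ≤ (∫ a, g a ^ 2 * w a ∂μ) / w₀ := by
    rw [← integral_div]
    refine integral_mono hsq (hint.div_const w₀) fun a => ?_
    rw [le_div_iff₀ hw₀]
    exact mul_le_mul_of_nonneg_left (hw a) (sq_nonneg _)
  rw [hg.eLpNorm_eq_integral_rpow_norm two_ne_zero ENNReal.ofNat_ne_top,
    ENNReal.toReal_ofReal (by positivity), ← Real.sqrt_div' _ hw₀.le]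
  simpa [← one_div, ← Real.sqrt_eq_rpow] using Real.sqrt_le_sqrt hI

end WeightedL2

lemma one_le_one_add_enr_rpow {γ : ℝ} (hγ : 0 ≤ γ) (ζ : Fin 3 → ℝ) : 1 ≤ (1 + enr ζ) ^ γ :=
  Real.one_le_rpow (le_add_of_nonneg_right (Real.sqrt_nonneg _)) hγ

lemma abs_Kop_le_mul_of_eLpNorm_le {γ ν₀ C₀ B : ℝ} (hν₀ : 0 < ν₀) {ν : (Fin 3 → ℝ) → ℝ}
    {k : (Fin 3 → ℝ) → (Fin 3 → ℝ) → ℝ} (hνb : ∀ ζ, ν₀ * (1 + enr ζ) ^ γ ≤ ν ζ)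
    (hK : ∀ g : (Fin 3 → ℝ) → ℝ, MemLp g 2 volume → ∀ ζ,
      (1 + enr ζ) ^ ((3 : ℝ) / 2 - γ) * |Kop k g ζ| ≤ C₀ * (eLpNorm g 2 volume).toReal)
    {g : (Fin 3 → ℝ) → ℝ} (hg : MemLp g 2 volume) (hB : (eLpNorm g 2 volume).toReal ≤ B)
    (ζ : Fin 3 → ℝ) :
    |Kop k g ζ| ≤ |C₀| * B / ν₀ * ν ζ := by
  set r := 1 + enr ζ
  have hr : 1 ≤ r := le_add_of_nonneg_right (Real.sqrt_nonneg _)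
  have hB₀ : 0 ≤ B := ENNReal.toReal_nonneg.trans hB
  calc |Kop k g ζ|
      ≤ r ^ ((3 : ℝ) / 2) * |Kop k g ζ| :=
        le_mul_of_one_le_left (abs_nonneg _) (Real.one_le_rpow hr (by norm_num))
    _ = r ^ ((3 : ℝ) / 2 - γ) * |Kop k g ζ| * r ^ γ := by
        rw [mul_right_comm, ← Real.rpow_add (by linarith), sub_add_cancel]
    _ ≤ |C₀| * B * r ^ γ :=
        mul_le_mul_of_nonneg_right ((hK g hg ζ).trans
          (mul_le_mul (le_abs_self _) hB ENNReal.toReal_nonneg (abs_nonneg _))) (by positivity)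
    _ ≤ |C₀| * B * (ν ζ / ν₀) := by
        gcongr
        exact (le_div_iff₀' hν₀).2 (hνb ζ)
    _ = |C₀| * B / ν₀ * ν ζ := by ring

/-- Here `⟨f⟩` is encoded through bounds `M₁ ≥ |||f|||`, `M₂ ≥ ‖f(0,·)‖_{L^∞({ζ₁>0})}` and
`M₃ ≥ ‖f(l,·)‖_{L^∞({ζ₁<0})}`; the hyperplane `ζ₁ = 0` is the null set on which a mild solution
is not determined. -/
theorem stmt4_general (γ ν₀ ν₁ C₀ : ℝ) (hγ0 : 0 < γ) (hν₀ : 0 < ν₀) :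
    ∃ C > (0 : ℝ),
      ∀ (l : ℝ), 0 < l →
      ∀ (ν : (Fin 3 → ℝ) → ℝ) (k : (Fin 3 → ℝ) → (Fin 3 → ℝ) → ℝ),
        Measurable ν → Measurable (Function.uncurry k) →
        (∀ ζ, ν₀ * (1 + enr ζ) ^ γ ≤ ν ζ ∧ ν ζ ≤ ν₁ * (1 + enr ζ) ^ γ) →
        (∀ g : (Fin 3 → ℝ) → ℝ, MemLp g 2 volume → ∀ ζ,
          (1 + enr ζ) ^ ((3 : ℝ) / 2 - γ) * |Kop k g ζ| ≤ C₀ * (eLpNorm g 2 volume).toReal) →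
        ∀ (f : ℝ → (Fin 3 → ℝ) → ℝ) (M₁ M₂ M₃ : ℝ), Measurable (Function.uncurry f) →
          MildSolution l ν k f →
          (∀ x ∈ Icc (0 : ℝ) l, Integrable (fun ζ => (f x ζ) ^ 2 * ν ζ) volume ∧
            starNorm ν (f x) ≤ M₁) →
          (∀ ζ : Fin 3 → ℝ, 0 < ζ 0 → |f 0 ζ| ≤ M₂) →
          (∀ ζ : Fin 3 → ℝ, ζ 0 < 0 → |f l ζ| ≤ M₃) →
          ∀ x ∈ Icc (0 : ℝ) l, ∀ ζ : Fin 3 → ℝ, ζ 0 ≠ 0 →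
            |f x ζ| ≤ C * (M₁ + M₂ + M₃) := by
  set q := |C₀| / (ν₀ * Real.sqrt ν₀)
  refine ⟨1 + q, by positivity, ?_⟩
  intro l hl ν k _ _ hνb hK f M₁ M₂ M₃ hfm hf hstar h0 hlb x hx ζ hζ
  have hνν₀ (ζ : Fin 3 → ℝ) : ν₀ ≤ ν ζ :=
    (le_mul_of_one_le_right hν₀.le (one_le_one_add_enr_rpow hγ0.le ζ)).trans (hνb ζ).1
  have hKf : ∀ s ∈ Icc 0 l, |Kop k (f s) ζ| ≤ q * M₁ * ν ζ := by
    intro s hs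
    have hmeas : AEStronglyMeasurable (f s) volume :=
      (hfm.comp measurable_prodMk_left).aestronglyMeasurable
    have hmem : MemLp (f s) 2 volume := (memLp_two_iff_integrable_sq hmeas).2
      (integrable_sq_of_integrable_sq_mul hν₀ hνν₀ hmeas (hstar s hs).1)
    have hL2 := (toReal_eLpNorm_two_le_sqrt_integral_sq_mul hν₀ hνν₀ hmem (hstar s hs).1).trans
      (div_le_div_of_nonneg_right (hstar s hs).2 (Real.sqrt_nonneg _))
    convert abs_Kop_le_mul_of_eLpNorm_le hν₀ (fun ζ => (hνb ζ).1) hK hmem hL2 ζ using 2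
    ring
  have hM₁ : 0 ≤ M₁ := (Real.sqrt_nonneg _).trans (hstar 0 ⟨le_rfl, hl.le⟩).2
  have hM₂ : 0 ≤ M₂ := (abs_nonneg _).trans (h0 ![1, 0, 0] (by simp))
  have hM₃ : 0 ≤ M₃ := (abs_nonneg _).trans (hlb ![-1, 0, 0] (by simp))
  have hν : 0 < ν ζ := hν₀.trans_le (hνν₀ ζ)
  have hq : 0 ≤ q := by positivity
  rcases hζ.lt_or_gt with hneg | hpos
  · nlinarith [hf.abs_le_of_neg hν hKf hx hneg, hlb ζ hneg]
  · nlinarith [hf.abs_le_of_pos hν hKf hx hpos, h0 ζ hpos]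

/-- a mild solution with ⟨f⟩ < ∞ is uniformly bounded:
|f(x,ζ)| ≤ C ⟨f⟩ (here ⟨f⟩ is encoded through bounds M₁ ≥ |||f|||,
M₂ ≥ ‖f(0,·)‖_{L^∞({ζ₁>0})}, M₃ ≥ ‖f(l,·)‖_{L^∞({ζ₁<0})}; the point ζ₁ = 0 is the
null set on which a mild solution is not determined). C depends only on ν₀, γ, C₀. -/
theorem stmt4 (γ ν₀ ν₁ C₀ : ℝ) (hγ0 : 0 < γ) (hγ1 : γ ≤ 1) (hν₀ : 0 < ν₀) (hν₀₁ : ν₀ < ν₁) :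
    ∃ C > (0 : ℝ),
      ∀ (l : ℝ), 0 < l →
      ∀ (ν : (Fin 3 → ℝ) → ℝ) (k : (Fin 3 → ℝ) → (Fin 3 → ℝ) → ℝ),
        Measurable ν → Measurable (Function.uncurry k) →
        (∀ ζ, ν₀ * (1 + enr ζ) ^ γ ≤ ν ζ ∧ ν ζ ≤ ν₁ * (1 + enr ζ) ^ γ) →
        (∀ g : (Fin 3 → ℝ) → ℝ, MemLp g 2 volume → ∀ ζ,
          (1 + enr ζ) ^ ((3 : ℝ) / 2 - γ) * |Kop k g ζ| ≤ C₀ * (eLpNorm g 2 volume).toReal) →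
        ∀ (f : ℝ → (Fin 3 → ℝ) → ℝ) (M₁ M₂ M₃ : ℝ), Measurable (Function.uncurry f) →
          MildSolution l ν k f →
          (∀ x ∈ Icc (0 : ℝ) l, Integrable (fun ζ => (f x ζ) ^ 2 * ν ζ) volume ∧
            starNorm ν (f x) ≤ M₁) →
          (∀ ζ : Fin 3 → ℝ, 0 < ζ 0 → |f 0 ζ| ≤ M₂) →
          (∀ ζ : Fin 3 → ℝ, ζ 0 < 0 → |f l ζ| ≤ M₃) →
          ∀ x ∈ Icc (0 : ℝ) l, ∀ ζ : Fin 3 → ℝ, ζ 0 ≠ 0 →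
            |f x ζ| ≤ C * (M₁ + M₂ + M₃) :=
  stmt4_general γ ν₀ ν₁ C₀ hγ0 hν₀
end
end

section
/- For every a ≥ 0 there is a constant C_a, depending only on a, γ, ν₀, ν₁, such that for every multi-index α and every 0 < t ≤ 1: ∫_{ζ₁>0} (1+|ζ|)^a |φ_α(ζ)| (ν(ζ)/ζ₁²) e^{−ν(ζ)t/ζ₁} dζ ≤ C_a A_α t^{−1}(1+|ln t|). -/
open MeasureTheory Real Set

noncomputable section

/-! Since `0 < γ ≤ 1`, the bounds on `ν` give `ν₀ ≤ ν(ζ) ≤ ν₁ (1 + |ζ|)`, so on `ζ₁ > 0` the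
integrand is at most `ν₁ (1 + |ζ|)^(a+1) |φ_α(ζ)| e^{-ν₀ t/ζ₁} / ζ₁²`. Split the Gaussian of `φ_α`
as `e^{-|ζ|²/4} e^{-|ζ|²/8} e^{-|ζ|²/8}`: the first factor turns the monomial into at most `A_α`,
since `|x|^n e^{-x²/4} ≤ (2n)^{n/2} e^{-n/2}`; the second absorbs the polynomial weight; the third
leaves integrable Gaussians in `ζ₂, ζ₃`. The resulting majorant factorises, and the substitution
`y = 1/x` gives `∫₀^∞ e^{-c/x} x⁻² dx = 1/c` with `c = ν₀ t`. This bounds the integral by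
`C A_α t⁻¹`, which is even stronger than the claim. -/

lemma rpow_mul_exp_neg_le {c y : ℝ} (hc : 0 ≤ c) (hy : 0 ≤ y) :
    y ^ c * exp (-y) ≤ c ^ c * exp (-c) := by
  rcases hc.eq_or_lt with rfl | hc
  · simpa using hy
  rcases hy.eq_or_lt with rfl | hy
  · rw [zero_rpow hc.ne', zero_mul]
    positivity
  rw [rpow_def_of_pos hy, rpow_def_of_pos hc, ← exp_add, ← exp_add, exp_le_exp]
  have hlog : c * log (y / c) ≤ c * (y / c - 1) :=
    mul_le_mul_of_nonneg_left (log_le_sub_one_of_pos (div_pos hy hc)) hc.le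
  rw [log_div hy.ne' hc.ne', mul_sub_one, mul_div_cancel₀ _ hc.ne'] at hlog
  linarith

lemma abs_pow_mul_exp_neg_sq_div_four_le (n : ℕ) (x : ℝ) :
    |x| ^ n * exp (-(x ^ 2) / 4) ≤ (2 * n) ^ ((n : ℝ) / 2) * exp (-(n : ℝ) / 2) := by
  have habs : |x| ^ n = 4 ^ ((n : ℝ) / 2) * (x ^ 2 / 4) ^ ((n : ℝ) / 2) := by
    rw [← mul_rpow (by norm_num) (by positivity), mul_div_cancel₀ _ (by norm_num), ← sq_abs,
      ← rpow_natCast, ← rpow_natCast, ← rpow_mul (abs_nonneg x), Nat.cast_ofNat,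
      mul_div_cancel₀ _ two_ne_zero]
  have hconst :
      (2 * n : ℝ) ^ ((n : ℝ) / 2) = 4 ^ ((n : ℝ) / 2) * ((n : ℝ) / 2) ^ ((n : ℝ) / 2) := by
    rw [← mul_rpow (by norm_num) (by positivity)]
    ring_nf
  rw [habs, hconst, neg_div, neg_div, mul_assoc, mul_assoc]
  exact mul_le_mul_of_nonneg_left (rpow_mul_exp_neg_le (by positivity) (by positivity))
    (by positivity)

lemma Aα_eq_prod (α : Fin 3 → ℕ) :
    Aα α = ∏ i, (2 * (α i : ℝ)) ^ ((α i : ℝ) / 2) * exp (-(α i : ℝ) / 2) := by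
  rw [Aα, Fin.prod_univ_three,
    show -((α 0 : ℝ) + α 1 + α 2) / 2 = -(α 0 : ℝ) / 2 + -(α 1 : ℝ) / 2 + -(α 2 : ℝ) / 2 by ring,
    exp_add, exp_add]
  ring

lemma Aα_nonneg (α : Fin 3 → ℕ) : 0 ≤ Aα α := by
  rw [Aα_eq_prod]
  positivity

lemma prod_abs_pow_mul_exp_le_Aα (α : Fin 3 → ℕ) (ζ : Fin 3 → ℝ) :
    ∏ i, |ζ i| ^ α i * exp (-(ζ i ^ 2) / 4) ≤ Aα α := by
  rw [Aα_eq_prod]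
  exact Finset.prod_le_prod (fun i _ => by positivity)
    (fun i _ => abs_pow_mul_exp_neg_sq_div_four_le (α i) (ζ i))

lemma enr_sq (ζ : Fin 3 → ℝ) : enr ζ ^ 2 = ζ 0 ^ 2 + ζ 1 ^ 2 + ζ 2 ^ 2 :=
  sq_sqrt (by positivity)

lemma abs_phiα (α : Fin 3 → ℕ) (ζ : Fin 3 → ℝ) :
    |phiα α ζ| = π ^ (-(3 : ℝ) / 4) * (∏ i, |ζ i| ^ α i) * exp (-enr ζ ^ 2 / 2) := by
  rw [phiα, Fin.prod_univ_three]
  simp only [abs_mul, abs_pow, abs_exp, abs_of_pos (rpow_pos_of_pos pi_pos _)]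
  ring

lemma one_add_rpow_mul_exp_neg_sq_div_eight_le {b s : ℝ} (hb : 0 ≤ b) (hs : 0 ≤ s) :
    (1 + s) ^ b * exp (-(s ^ 2) / 8) ≤ exp (2 * b ^ 2) := by
  have hlog : log (1 + s) ≤ s := by linarith [log_le_sub_one_of_pos (by linarith : 0 < 1 + s)]
  rw [rpow_def_of_pos (by linarith), ← exp_add, exp_le_exp]
  nlinarith [sq_nonneg (s - 4 * b), mul_le_mul_of_nonneg_left hlog hb]

lemma one_add_enr_rpow_mul_abs_phiα_le {b : ℝ} (hb : 0 ≤ b) (α : Fin 3 → ℕ) (ζ : Fin 3 → ℝ) :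
    (1 + enr ζ) ^ b * |phiα α ζ| ≤ π ^ (-(3 : ℝ) / 4) * exp (2 * b ^ 2) * Aα α *
      (exp (-(1 / 8) * ζ 1 ^ 2) * exp (-(1 / 8) * ζ 2 ^ 2)) := by
  have hsplit : exp (-enr ζ ^ 2 / 2) = (∏ i, exp (-(ζ i ^ 2) / 4)) * exp (-(enr ζ ^ 2) / 8) *
      exp (-(1 / 8) * ζ 0 ^ 2) * (exp (-(1 / 8) * ζ 1 ^ 2) * exp (-(1 / 8) * ζ 2 ^ 2)) := by
    simp only [Fin.prod_univ_three, ← exp_add, enr_sq]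
    ring_nf
  have hζ₀ : exp (-(1 / 8) * ζ 0 ^ 2) ≤ 1 := exp_le_one_iff.2 (by nlinarith [sq_nonneg (ζ 0)])
  have hmonomial := prod_abs_pow_mul_exp_le_Aα α ζ
  have hweight := one_add_rpow_mul_exp_neg_sq_div_eight_le hb (enr_nonneg ζ)
  calc (1 + enr ζ) ^ b * |phiα α ζ|
      = π ^ (-(3 : ℝ) / 4) * ((1 + enr ζ) ^ b * exp (-(enr ζ ^ 2) / 8)) *
          exp (-(1 / 8) * ζ 0 ^ 2) * (exp (-(1 / 8) * ζ 1 ^ 2) * exp (-(1 / 8) * ζ 2 ^ 2)) *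
          ∏ i, |ζ i| ^ α i * exp (-(ζ i ^ 2) / 4) := by
        rw [abs_phiα, hsplit, Finset.prod_mul_distrib]
        ring
    _ ≤ π ^ (-(3 : ℝ) / 4) * exp (2 * b ^ 2) * 1 *
          (exp (-(1 / 8) * ζ 1 ^ 2) * exp (-(1 / 8) * ζ 2 ^ 2)) * Aα α := by
        gcongr
    _ = π ^ (-(3 : ℝ) / 4) * exp (2 * b ^ 2) * Aα α *
          (exp (-(1 / 8) * ζ 1 ^ 2) * exp (-(1 / 8) * ζ 2 ^ 2)) := by
        ring

lemma le_and_le_mul_one_add_of_rpow_bounds {γ ν₀ ν₁ s v : ℝ} (hγ0 : 0 ≤ γ) (hγ1 : γ ≤ 1)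
    (hν₀ : 0 ≤ ν₀) (hν₁ : 0 ≤ ν₁) (hs : 0 ≤ s)
    (hv : ν₀ * (1 + s) ^ γ ≤ v ∧ v ≤ ν₁ * (1 + s) ^ γ) : ν₀ ≤ v ∧ v ≤ ν₁ * (1 + s) := by
  have hlo : 1 ≤ (1 + s) ^ γ := one_le_rpow (by linarith) hγ0
  have hhi : (1 + s) ^ γ ≤ 1 + s := by
    simpa using rpow_le_rpow_of_exponent_le (by linarith : 1 ≤ 1 + s) hγ1
  constructor
  · nlinarith [hv.1]
  · nlinarith [hv.2]

lemma weighted_abs_phiα_mul_kernel_le {a ν₀ ν₁ t v : ℝ} {α : Fin 3 → ℕ} {ζ : Fin 3 → ℝ}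
    (ha : 0 ≤ a) (hν₀ : 0 ≤ ν₀) (ht : 0 ≤ t) (hζ : 0 < ζ 0)
    (hlo : ν₀ ≤ v) (hhi : v ≤ ν₁ * (1 + enr ζ)) :
    (1 + enr ζ) ^ a * |phiα α ζ| * (v / ζ 0 ^ 2) * exp (-(v * t) / ζ 0) ≤
      π ^ (-(3 : ℝ) / 4) * ν₁ * exp (2 * (a + 1) ^ 2) * Aα α *
        (exp (-(ν₀ * t) / ζ 0) / ζ 0 ^ 2 *
          (exp (-(1 / 8) * ζ 1 ^ 2) * exp (-(1 / 8) * ζ 2 ^ 2))) := by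
  have hr : 0 < 1 + enr ζ := by linarith [enr_nonneg ζ]
  have hν₁ : 0 ≤ ν₁ := nonneg_of_mul_nonneg_left (by linarith) hr
  have hgauss := one_add_enr_rpow_mul_abs_phiα_le (by linarith : 0 ≤ a + 1) α ζ
  calc (1 + enr ζ) ^ a * |phiα α ζ| * (v / ζ 0 ^ 2) * exp (-(v * t) / ζ 0)
      ≤ (1 + enr ζ) ^ a * |phiα α ζ| * (ν₁ * (1 + enr ζ) / ζ 0 ^ 2) *
          exp (-(ν₀ * t) / ζ 0) := by
        gcongr
    _ = ν₁ * ((1 + enr ζ) ^ (a + 1) * |phiα α ζ|) * (exp (-(ν₀ * t) / ζ 0) / ζ 0 ^ 2) := by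
        rw [rpow_add hr, rpow_one]
        ring
    _ ≤ ν₁ * (π ^ (-(3 : ℝ) / 4) * exp (2 * (a + 1) ^ 2) * Aα α *
          (exp (-(1 / 8) * ζ 1 ^ 2) * exp (-(1 / 8) * ζ 2 ^ 2))) *
          (exp (-(ν₀ * t) / ζ 0) / ζ 0 ^ 2) := by
        gcongr
    _ = _ := by
        ring

lemma exp_neg_div_div_sq_eq_comp_inv {c x : ℝ} (hx : 0 < x) :
    (|(-1 : ℝ)| * x ^ ((-1 : ℝ) - 1)) • exp (-c * x ^ (-1 : ℝ)) = exp (-c / x) / x ^ 2 := by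
  rw [rpow_neg_one, smul_eq_mul, show (-1 : ℝ) - 1 = -(2 : ℕ) by norm_num, rpow_neg hx.le,
    rpow_natCast]
  field_simp
  ring_nf

lemma integrableOn_exp_neg_div_div_sq {c : ℝ} (hc : 0 < c) :
    IntegrableOn (fun x : ℝ => exp (-c / x) / x ^ 2) (Ioi 0) := by
  refine (integrableOn_congr_fun (fun x hx => exp_neg_div_div_sq_eq_comp_inv hx)
    measurableSet_Ioi).1 ?_
  exact (integrableOn_Ioi_comp_rpow_iff (fun y => exp (-c * y)) (by norm_num)).2
    (integrableOn_exp_mul_Ioi (by linarith) 0)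

lemma integral_Ioi_exp_neg_div_div_sq {c : ℝ} (hc : 0 < c) :
    ∫ x in Ioi (0 : ℝ), exp (-c / x) / x ^ 2 = c⁻¹ := by
  rw [← setIntegral_congr_fun measurableSet_Ioi (fun x hx => exp_neg_div_div_sq_eq_comp_inv hx),
    integral_comp_rpow_Ioi (fun y => exp (-c * y)) (by norm_num),
    integral_exp_mul_Ioi (by linarith) 0]
  simp

lemma integrable_fin_three_mul {𝕜 : Type*} [RCLike 𝕜] {f g h : ℝ → 𝕜} (hf : Integrable f)
    (hg : Integrable g) (hh : Integrable h) :
    Integrable (fun ζ : Fin 3 → ℝ => f (ζ 0) * g (ζ 1) * h (ζ 2)) := by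
  have := Integrable.fintype_prod (f := ![f, g, h]) (μ := fun _ => volume)
    (fun i => by fin_cases i <;> assumption)
  simpa [Fin.prod_univ_three, volume_pi] using this

lemma integral_fin_three_mul {𝕜 : Type*} [RCLike 𝕜] (f g h : ℝ → 𝕜) :
    ∫ ζ : Fin 3 → ℝ, f (ζ 0) * g (ζ 1) * h (ζ 2) = (∫ x, f x) * (∫ x, g x) * ∫ x, h x := by
  simpa [Fin.prod_univ_three] using integral_fintype_prod_volume_eq_prod ![f, g, h]

lemma setIntegral_pos_fst_le {f : (Fin 3 → ℝ) → ℝ} {M c : ℝ} (hc : 0 < c)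
    (hf_nonneg : ∀ ζ, 0 < ζ 0 → 0 ≤ f ζ)
    (hf_le : ∀ ζ, 0 < ζ 0 → f ζ ≤
      M * (exp (-c / ζ 0) / ζ 0 ^ 2 * (exp (-(1 / 8) * ζ 1 ^ 2) * exp (-(1 / 8) * ζ 2 ^ 2)))) :
    ∫ ζ in {ζ : Fin 3 → ℝ | 0 < ζ 0}, f ζ ≤ M * (8 * π / c) := by
  set k : ℝ → ℝ := (Ioi 0).indicator fun x => exp (-c / x) / x ^ 2
  set g : ℝ → ℝ := fun y => exp (-(1 / 8) * y ^ 2)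
  have hS : MeasurableSet {ζ : Fin 3 → ℝ | 0 < ζ 0} :=
    measurableSet_lt measurable_const (measurable_pi_apply 0)
  have hk : Integrable k :=
    (integrable_indicator_iff measurableSet_Ioi).2 (integrableOn_exp_neg_div_div_sq hc)
  have hg : Integrable g := integrable_exp_neg_mul_sq (by norm_num)
  calc ∫ ζ in {ζ : Fin 3 → ℝ | 0 < ζ 0}, f ζ
      ≤ ∫ ζ in {ζ : Fin 3 → ℝ | 0 < ζ 0}, M * (k (ζ 0) * g (ζ 1) * g (ζ 2)) :=
        integral_mono_of_nonneg (ae_restrict_of_forall_mem hS hf_nonneg)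
          ((integrable_fin_three_mul hk hg hg).const_mul M).integrableOn
          (ae_restrict_of_forall_mem hS fun ζ hζ => by
            simpa [k, g, indicator_of_mem (show ζ 0 ∈ Ioi 0 from hζ), mul_assoc] using hf_le ζ hζ)
    _ = M * ((∫ x, k x) * (∫ y, g y) * ∫ y, g y) := by
        rw [setIntegral_eq_integral_of_forall_compl_eq_zero fun ζ hζ => by
            simp [k, indicator_of_notMem (show ζ 0 ∉ Ioi 0 from hζ)],
          integral_const_mul, integral_fin_three_mul]
    _ = M * (8 * π / c) := by
        rw [integral_indicator measurableSet_Ioi, integral_Ioi_exp_neg_div_div_sq hc, mul_assoc,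
          integral_gaussian, mul_self_sqrt (by positivity)]
        field_simp

/-- ‖φ_α ν(ζ)/ζ₁² e^{-ν t/ζ₁}‖_{L¹_a({ζ₁>0})} ≤ C_a A_α t⁻¹(1+|ln t|),
with C_a depending only on a, γ, ν₀, ν₁. -/
theorem stmt10 (γ ν₀ ν₁ a : ℝ) (hγ0 : 0 < γ) (hγ1 : γ ≤ 1) (hν₀ : 0 < ν₀) (hν₀₁ : ν₀ < ν₁)
    (ha : 0 ≤ a) :
    ∃ Ca > (0 : ℝ), ∀ ν : (Fin 3 → ℝ) → ℝ, Measurable ν →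
      (∀ ζ, ν₀ * (1 + enr ζ) ^ γ ≤ ν ζ ∧ ν ζ ≤ ν₁ * (1 + enr ζ) ^ γ) →
      ∀ (α : Fin 3 → ℕ) (t : ℝ), 0 < t → t ≤ 1 →
        (∫ ζ in {ζ : Fin 3 → ℝ | 0 < ζ 0},
            (1 + enr ζ) ^ a * |phiα α ζ| * (ν ζ / (ζ 0) ^ 2) * Real.exp (-(ν ζ * t) / ζ 0)) ≤
          Ca * Aα α * t⁻¹ * (1 + |Real.log t|) := by
  have hν₁ : 0 < ν₁ := hν₀.trans hν₀₁
  set K := π ^ (-(3 : ℝ) / 4) * ν₁ * exp (2 * (a + 1) ^ 2)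
  refine ⟨K * (8 * π) / ν₀, by positivity, fun ν _ hν α t ht _ => ?_⟩
  have hνζ ζ : ν₀ ≤ ν ζ ∧ ν ζ ≤ ν₁ * (1 + enr ζ) :=
    le_and_le_mul_one_add_of_rpow_bounds hγ0.le hγ1 hν₀.le hν₁.le (enr_nonneg ζ) (hν ζ)
  calc ∫ ζ in {ζ : Fin 3 → ℝ | 0 < ζ 0},
        (1 + enr ζ) ^ a * |phiα α ζ| * (ν ζ / ζ 0 ^ 2) * exp (-(ν ζ * t) / ζ 0)
      ≤ K * Aα α * (8 * π / (ν₀ * t)) := by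
        refine setIntegral_pos_fst_le (mul_pos hν₀ ht) (fun ζ hζ => ?_) (fun ζ hζ => ?_)
        · have hweight := rpow_nonneg (add_nonneg zero_le_one (enr_nonneg ζ)) a
          have hν_nonneg := hν₀.le.trans (hνζ ζ).1
          positivity
        · exact weighted_abs_phiα_mul_kernel_le ha hν₀.le ht.le hζ (hνζ ζ).1 (hνζ ζ).2
    _ = K * (8 * π) / ν₀ * Aα α * t⁻¹ := by
        field_simp
    _ ≤ K * (8 * π) / ν₀ * Aα α * t⁻¹ * (1 + |log t|) :=
        le_mul_of_one_le_right (by have hA := Aα_nonneg α; positivity)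
          (le_add_of_nonneg_right (abs_nonneg _))
end
end

section
/- For every a ≥ 0 there is a constant C_a, depending only on a, γ, ν₀, ν₁, such that for every multi-index α and every 0 < t ≤ 1: sup_{ζ₁>0} (1+|ζ|)^a |φ_α(ζ)| (ν(ζ)/ζ₁²) e^{−ν(ζ)t/ζ₁} ≤ C_a A_α t^{−2}. -/
open MeasureTheory Real Set

noncomputable section

lemma key1 (n : ℕ) (x : ℝ) :
    |x| ^ n * Real.exp (-(x ^ 2) / 4) ≤
      (2 * (n : ℝ)) ^ ((n : ℝ) / 2) * Real.exp (-(n : ℝ) / 2) := by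
  rcases Nat.eq_zero_or_pos n with h0 | hn
  · subst h0
    simp only [pow_zero, one_mul, Nat.cast_zero, zero_div, Real.rpow_zero, neg_zero,
      Real.exp_zero, mul_one]
    exact Real.exp_le_one_iff.mpr (by nlinarith [sq_nonneg x])
  · have hnpos : (0 : ℝ) < n := by exact_mod_cast hn
    rcases eq_or_lt_of_le (abs_nonneg x) with ht0 | ht
    · rw [← ht0, zero_pow (by omega), zero_mul]
      positivity
    · have hxsq : (0 : ℝ) < x ^ 2 := by
        have h := pow_pos ht 2
        rwa [sq_abs] at h
      have hu : (0 : ℝ) < x ^ 2 / (2 * n) := by positivity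
      have hlog := Real.log_le_sub_one_of_pos hu
      rw [Real.log_div (ne_of_gt hxsq) (by positivity)] at hlog
      have hlx : Real.log (x ^ 2) = 2 * Real.log |x| := by
        rw [← sq_abs x, Real.log_pow]; push_cast; ring
      rw [hlx] at hlog
      have h1 : |x| ^ n = Real.exp ((n : ℝ) * Real.log |x|) := by
        rw [← Real.log_pow, Real.exp_log (pow_pos ht n)]
      have h2 : (2 * (n : ℝ)) ^ ((n : ℝ) / 2) =
          Real.exp (Real.log (2 * (n : ℝ)) * ((n : ℝ) / 2)) := by
        rw [← Real.rpow_def_of_pos (by positivity)]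
      rw [h1, h2, ← Real.exp_add, ← Real.exp_add, Real.exp_le_exp]
      have hmul := mul_le_mul_of_nonneg_left hlog (by positivity : (0 : ℝ) ≤ (n : ℝ) / 2)
      have hcanc : (n : ℝ) / 2 * (x ^ 2 / (2 * n) - 1) = x ^ 2 / 4 - (n : ℝ) / 2 := by
        field_simp; ring
      rw [hcanc] at hmul
      nlinarith [hmul]

lemma key2 (a r : ℝ) (ha : 0 ≤ a) (hr : 0 ≤ r) :
    (1 + r) ^ a * Real.exp (-(r ^ 2) / 4) ≤ Real.exp (a ^ 2) := by
  have h1 : (1 + r) ^ a ≤ Real.exp (r * a) := by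
    have hle : 1 + r ≤ Real.exp r := by linarith [Real.add_one_le_exp r]
    calc (1 + r) ^ a ≤ (Real.exp r) ^ a :=
          Real.rpow_le_rpow (by linarith) hle ha
      _ = Real.exp (r * a) := by
          rw [Real.rpow_def_of_pos (Real.exp_pos r), Real.log_exp]
  calc (1 + r) ^ a * Real.exp (-(r ^ 2) / 4)
      ≤ Real.exp (r * a) * Real.exp (-(r ^ 2) / 4) :=
        mul_le_mul_of_nonneg_right h1 (le_of_lt (Real.exp_pos _))
    _ = Real.exp (r * a + -(r ^ 2) / 4) := by rw [← Real.exp_add]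
    _ ≤ Real.exp (a ^ 2) := by
        rw [Real.exp_le_exp]; nlinarith [sq_nonneg (r / 2 - a)]

lemma key3 (x : ℝ) (hx : 0 < x) : Real.exp (-x) ≤ 4 / x ^ 2 := by
  have h : 1 + x / 2 ≤ Real.exp (x / 2) := by linarith [Real.add_one_le_exp (x / 2)]
  have h2 : Real.exp (x / 2) ^ 2 = Real.exp x := by
    rw [sq, ← Real.exp_add]; ring_nf
  have hsq : x ^ 2 / 4 ≤ Real.exp x := by nlinarith [Real.exp_pos (x / 2)]
  rw [le_div_iff₀ (by positivity : (0:ℝ) < x ^ 2)]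
  have hmul : Real.exp (-x) * Real.exp x = 1 := by rw [← Real.exp_add]; simp
  nlinarith [Real.exp_pos (-x)]

/-- ‖φ_α ν(ζ)/ζ₁² e^{-ν t/ζ₁}‖_{L^∞_a({ζ₁>0})} ≤ C_a A_α t⁻²,
with C_a depending only on a, γ, ν₀, ν₁. -/
theorem stmt11 (γ ν₀ ν₁ a : ℝ) (hγ0 : 0 < γ) (hγ1 : γ ≤ 1) (hν₀ : 0 < ν₀) (hν₀₁ : ν₀ < ν₁)
    (ha : 0 ≤ a) :
    ∃ Ca > (0 : ℝ), ∀ ν : (Fin 3 → ℝ) → ℝ, Measurable ν →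
      (∀ ζ, ν₀ * (1 + enr ζ) ^ γ ≤ ν ζ ∧ ν ζ ≤ ν₁ * (1 + enr ζ) ^ γ) →
      ∀ (α : Fin 3 → ℕ) (t : ℝ), 0 < t → t ≤ 1 →
        ∀ ζ : Fin 3 → ℝ, 0 < ζ 0 →
          (1 + enr ζ) ^ a * |phiα α ζ| * (ν ζ / (ζ 0) ^ 2) * Real.exp (-(ν ζ * t) / ζ 0) ≤
            Ca * Aα α / t ^ 2 := by
  have hpipos : (0:ℝ) < Real.pi ^ (-(3:ℝ)/4) := Real.rpow_pos_of_pos Real.pi_pos _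
  refine ⟨4 * Real.pi ^ (-(3:ℝ)/4) * Real.exp (a^2) / ν₀, by positivity, ?_⟩
  intro ν _ hbound α t ht ht1 ζ hζ
  set r := enr ζ with hrdef
  have hr : 0 ≤ r := Real.sqrt_nonneg _
  have hr2 : r ^ 2 = ζ 0 ^ 2 + ζ 1 ^ 2 + ζ 2 ^ 2 := Real.sq_sqrt (by positivity)
  have h1r : (1:ℝ) ≤ (1 + r) ^ γ := by
    have := Real.rpow_le_rpow_of_exponent_le (by linarith : (1:ℝ) ≤ 1 + r) (le_of_lt hγ0)
    simpa using this
  have hνν₀ : ν₀ ≤ ν ζ := by nlinarith [(hbound ζ).1]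
  have hνpos : 0 < ν ζ := lt_of_lt_of_le hν₀ hνν₀
  have hphi : |phiα α ζ| = Real.pi ^ (-(3:ℝ)/4) * |ζ 0| ^ (α 0) * |ζ 1| ^ (α 1) *
      |ζ 2| ^ (α 2) * Real.exp (-r ^ 2 / 2) := by
    rw [phiα, abs_mul, abs_mul, abs_mul, abs_mul, abs_pow, abs_pow, abs_pow,
      abs_of_pos hpipos, abs_of_pos (Real.exp_pos _)]
  have hsplit : Real.exp (-r ^ 2 / 2) = Real.exp (-(ζ 0 ^ 2) / 4) * Real.exp (-(ζ 1 ^ 2) / 4) *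
      Real.exp (-(ζ 2 ^ 2) / 4) * Real.exp (-(r ^ 2) / 4) := by
    rw [← Real.exp_add, ← Real.exp_add, ← Real.exp_add]
    congr 1
    rw [hr2]; ring
  -- middle factor bound
  have hx : 0 < ν ζ * t / ζ 0 := by positivity
  have hmid : ν ζ / ζ 0 ^ 2 * Real.exp (-(ν ζ * t) / ζ 0) ≤ 4 / (ν₀ * t ^ 2) := by
    have h3 := key3 _ hx
    have hne : -(ν ζ * t) / ζ 0 = -(ν ζ * t / ζ 0) := by ring
    rw [hne]
    have hb : ν ζ / ζ 0 ^ 2 * (4 / (ν ζ * t / ζ 0) ^ 2) = 4 / (ν ζ * t ^ 2) := by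
      field_simp
    calc ν ζ / ζ 0 ^ 2 * Real.exp (-(ν ζ * t / ζ 0))
        ≤ ν ζ / ζ 0 ^ 2 * (4 / (ν ζ * t / ζ 0) ^ 2) :=
          mul_le_mul_of_nonneg_left h3 (by positivity)
      _ = 4 / (ν ζ * t ^ 2) := hb
      _ ≤ 4 / (ν₀ * t ^ 2) := by
          apply div_le_div_of_nonneg_left (by norm_num) (by positivity)
          nlinarith
  have hexp3 : Real.exp (-((α 0:ℝ) + (α 1:ℝ) + (α 2:ℝ)) / 2) =
      Real.exp (-(α 0:ℝ) / 2) * Real.exp (-(α 1:ℝ) / 2) * Real.exp (-(α 2:ℝ) / 2) := by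
    rw [← Real.exp_add, ← Real.exp_add]; ring_nf
  have hfive : ((1 + r) ^ a * Real.exp (-(r ^ 2) / 4)) * (Real.pi ^ (-(3:ℝ)/4)) *
      (|ζ 0| ^ (α 0) * Real.exp (-(ζ 0 ^ 2) / 4)) *
      (|ζ 1| ^ (α 1) * Real.exp (-(ζ 1 ^ 2) / 4)) *
      (|ζ 2| ^ (α 2) * Real.exp (-(ζ 2 ^ 2) / 4)) ≤
      Real.exp (a ^ 2) * (Real.pi ^ (-(3:ℝ)/4)) *
      ((2 * (α 0 : ℝ)) ^ ((α 0 : ℝ) / 2) * Real.exp (-(α 0 : ℝ) / 2)) *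
      ((2 * (α 1 : ℝ)) ^ ((α 1 : ℝ) / 2) * Real.exp (-(α 1 : ℝ) / 2)) *
      ((2 * (α 2 : ℝ)) ^ ((α 2 : ℝ) / 2) * Real.exp (-(α 2 : ℝ) / 2)) := by
    gcongr ?_ * _ * ?_ * ?_ * ?_
    · exact key2 a r ha hr
    · exact key1 (α 0) (ζ 0)
    · exact key1 (α 1) (ζ 1)
    · exact key1 (α 2) (ζ 2)
  calc (1 + r) ^ a * |phiα α ζ| * (ν ζ / ζ 0 ^ 2) * Real.exp (-(ν ζ * t) / ζ 0)
      = (((1 + r) ^ a * Real.exp (-(r ^ 2) / 4)) * (Real.pi ^ (-(3:ℝ)/4)) *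
        (|ζ 0| ^ (α 0) * Real.exp (-(ζ 0 ^ 2) / 4)) *
        (|ζ 1| ^ (α 1) * Real.exp (-(ζ 1 ^ 2) / 4)) *
        (|ζ 2| ^ (α 2) * Real.exp (-(ζ 2 ^ 2) / 4))) *
        (ν ζ / ζ 0 ^ 2 * Real.exp (-(ν ζ * t) / ζ 0)) := by
        rw [hphi, hsplit]; ring
    _ ≤ (Real.exp (a ^ 2) * (Real.pi ^ (-(3:ℝ)/4)) *
        ((2 * (α 0 : ℝ)) ^ ((α 0 : ℝ) / 2) * Real.exp (-(α 0 : ℝ) / 2)) *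
        ((2 * (α 1 : ℝ)) ^ ((α 1 : ℝ) / 2) * Real.exp (-(α 1 : ℝ) / 2)) *
        ((2 * (α 2 : ℝ)) ^ ((α 2 : ℝ) / 2) * Real.exp (-(α 2 : ℝ) / 2))) *
        (4 / (ν₀ * t ^ 2)) := by
        apply mul_le_mul hfive hmid (by positivity) (by positivity)
    _ = 4 * Real.pi ^ (-(3:ℝ)/4) * Real.exp (a^2) / ν₀ * Aα α / t ^ 2 := by
        rw [Aα, hexp3]; field_simp
end
end

section
/- For x > 0 define the exponential integral E₁(x) := ∫₀¹ z^{−1} e^{−x/z} dz. Then for all x > 0: (1/2) e^{−x} ln(1 + 2/x) ≤ E₁(x) ≤ e^{−x} ln(1 + 1/x). -/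
/-! Both bounds come from the primitive `G_a(z) = e^{-x/z} log(1 + a z/x)`, which vanishes at
`z = 0` and equals `e^{-x} log(1 + a/x)` at `z = 1`. Its derivative is
`e^{-x/z} (x z⁻² log(1 + a z/x) + a/(x + a z))`, and the elementary bounds
`t/(1+t) ≤ log(1+t) ≤ ((1+t) - (1+t)⁻¹)/2` show that it dominates `z⁻¹ e^{-x/z}` for `a = 1` and
is at most twice it for `a = 2`. -/

open MeasureTheory Real Set

noncomputable section

namespace Real

lemma log_le_sub_inv_div_two {y : ℝ} (hy : 1 ≤ y) : log y ≤ (y - y⁻¹) / 2 := by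
  rw [← sinh_log (by linarith)]
  exact self_le_sinh_iff.mpr (log_nonneg hy)

lemma exp_neg_div_le_one {x z : ℝ} (hx : 0 ≤ x) (hz : 0 ≤ z) : exp (-x / z) ≤ 1 :=
  exp_le_one_iff.mpr (div_nonpos_of_nonpos_of_nonneg (neg_nonpos.mpr hx) hz)

lemma exp_neg_div_le_div {x z : ℝ} (hx : 0 < x) (hz : 0 < z) : exp (-x / z) ≤ z / x := by
  rw [neg_div, exp_neg]
  exact inv_anti₀ (by positivity)
    ((le_add_of_nonneg_right zero_le_one).trans (add_one_le_exp (x / z))) |>.trans_eq (inv_div x z)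

end Real

open Filter

section

variable {x a z : ℝ}

lemma integrableOn_inv_mul_exp_neg_div (hx : 0 < x) :
    IntegrableOn (fun z ↦ z⁻¹ * exp (-x / z)) (Icc 0 1) := by
  rw [integrableOn_Icc_iff_integrableOn_Ioc]
  refine Measure.integrableOn_of_bounded (M := 1 / x) measure_Ioc_lt_top.ne
    (by fun_prop) ?_
  filter_upwards [ae_restrict_mem measurableSet_Ioc] with z hz
  obtain ⟨hz, -⟩ := hz
  rw [norm_of_nonneg (by positivity)]
  calc z⁻¹ * exp (-x / z) ≤ z⁻¹ * (z / x) := by gcongr; exact exp_neg_div_le_div hx hz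
    _ = 1 / x := by field_simp

def expLogPrimitive (x a z : ℝ) : ℝ := exp (-x / z) * log (1 + a * z / x)

def expLogPrimitiveDeriv (x a z : ℝ) : ℝ :=
  exp (-x / z) * (x / z ^ 2 * log (1 + a * z / x) + a / (x + a * z))

@[simp] lemma expLogPrimitive_zero : expLogPrimitive x a 0 = 0 := by
  simp [expLogPrimitive]

@[simp] lemma expLogPrimitive_one : expLogPrimitive x a 1 = exp (-x) * log (1 + a / x) := by
  simp [expLogPrimitive]

lemma hasDerivAt_expLogPrimitive (hx : 0 < x) (ha : 0 ≤ a) (hz : 0 < z) :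
    HasDerivAt (expLogPrimitive x a) (expLogPrimitiveDeriv x a z) z := by
  have hexp : HasDerivAt (fun z ↦ exp (-x / z)) (exp (-x / z) * (x / z ^ 2)) z := by
    simpa [div_eq_mul_inv, neg_mul] using ((hasDerivAt_inv hz.ne').const_mul (-x)).exp
  have hlog : HasDerivAt (fun z ↦ log (1 + a * z / x)) (a / (x + a * z)) z := by
    refine ((((hasDerivAt_id z).const_mul a).div_const x).const_add 1).log
      (by positivity : 1 + a * z / x ≠ 0) |>.congr_deriv ?_
    simp only [id, mul_one]
    field_simp
  refine (hexp.mul hlog).congr_deriv ?_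
  simp only [expLogPrimitiveDeriv]
  ring

lemma continuousOn_expLogPrimitive (hx : 0 < x) (ha : 0 ≤ a) :
    ContinuousOn (expLogPrimitive x a) (Ici 0) := by
  intro z hz
  rcases (mem_Ici.mp hz).eq_or_lt with rfl | hz
  · rw [ContinuousWithinAt, expLogPrimitive_zero]
    refine isBoundedUnder_le_mul_tendsto_zero (isBoundedUnder_of_eventually_le (a := 1) ?_) ?_
    · filter_upwards [self_mem_nhdsWithin] with z hz
      rw [Function.comp_apply, norm_of_nonneg (exp_pos _).le]
      exact exp_neg_div_le_one hx.le hz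
    · have : ContinuousAt (fun z ↦ log (1 + a * z / x)) 0 := by fun_prop (disch := simp)
      simpa using this.tendsto.mono_left nhdsWithin_le_nhds
  · exact (hasDerivAt_expLogPrimitive hx ha hz).continuousAt.continuousWithinAt

lemma inv_mul_exp_neg_div_le_expLogPrimitiveDeriv_one (hx : 0 < x) (hz : 0 < z) :
    z⁻¹ * exp (-x / z) ≤ expLogPrimitiveDeriv x 1 z := by
  have hlog : z / (x + z) ≤ log (1 + z / x) := by
    convert one_sub_inv_le_log_of_pos (by positivity : 0 < 1 + z / x) using 1
    field_simp
    ring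
  have hbracket : z⁻¹ ≤ x / z ^ 2 * log (1 + 1 * z / x) + 1 / (x + 1 * z) := calc
    z⁻¹ = x / z ^ 2 * (z / (x + z)) + 1 / (x + z) := by field_simp
    _ ≤ x / z ^ 2 * log (1 + 1 * z / x) + 1 / (x + 1 * z) := by simp only [one_mul]; gcongr
  rw [expLogPrimitiveDeriv, mul_comm]
  exact mul_le_mul_of_nonneg_left hbracket (exp_pos _).le

lemma expLogPrimitiveDeriv_two_le (hx : 0 < x) (hz : 0 < z) :
    expLogPrimitiveDeriv x 2 z / 2 ≤ z⁻¹ * exp (-x / z) := by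
  have hlog : log (1 + 2 * z / x) ≤ 2 * z * (x + z) / (x * (x + 2 * z)) := by
    convert log_le_sub_inv_div_two (le_add_of_nonneg_right (by positivity : 0 ≤ 2 * z / x))
      using 1
    field_simp
    ring
  have hbracket : (x / z ^ 2 * log (1 + 2 * z / x) + 2 / (x + 2 * z)) / 2 ≤ z⁻¹ := calc
    _ ≤ (x / z ^ 2 * (2 * z * (x + z) / (x * (x + 2 * z))) + 2 / (x + 2 * z)) / 2 := by gcongr
    _ = z⁻¹ := by field_simp; ring
  rw [expLogPrimitiveDeriv, mul_div_assoc, mul_comm z⁻¹]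
  exact mul_le_mul_of_nonneg_left hbracket (exp_pos _).le

end

/-- bounds for the exponential integral E₁(x) = ∫₀¹ z⁻¹ e^{-x/z} dz:
(1/2) e^{-x} ln(1+2/x) ≤ E₁(x) ≤ e^{-x} ln(1+1/x) for all x > 0. -/
theorem stmt16 (x : ℝ) (hx : 0 < x) :
    (1 / 2) * Real.exp (-x) * Real.log (1 + 2 / x) ≤
        (∫ z in (0 : ℝ)..1, z⁻¹ * Real.exp (-x / z)) ∧
      (∫ z in (0 : ℝ)..1, z⁻¹ * Real.exp (-x / z)) ≤ Real.exp (-x) * Real.log (1 + 1 / x) := by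
  have hcont {a : ℝ} (ha : 0 ≤ a) : ContinuousOn (expLogPrimitive x a) (Icc 0 1) :=
    (continuousOn_expLogPrimitive hx ha).mono Icc_subset_Ici_self
  have hderiv {a : ℝ} (ha : 0 ≤ a) (z : ℝ) (hz : z ∈ Ioo 0 1) :
      HasDerivWithinAt (expLogPrimitive x a) (expLogPrimitiveDeriv x a z) (Ioi z) z :=
    (hasDerivAt_expLogPrimitive hx ha hz.1).hasDerivWithinAt
  have hint := integrableOn_inv_mul_exp_neg_div hx
  constructor
  · have h := intervalIntegral.sub_le_integral_of_hasDeriv_right_of_le zero_le_one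
      ((hcont zero_le_two).div_const 2) (fun z hz ↦ (hderiv zero_le_two z hz).div_const 2) hint
      fun z hz ↦ expLogPrimitiveDeriv_two_le hx hz.1
    simpa [div_eq_inv_mul, mul_assoc] using h
  · simpa using intervalIntegral.integral_le_sub_of_hasDeriv_right_of_le zero_le_one
      (hcont zero_le_one) (hderiv zero_le_one) hint
      fun z hz ↦ inv_mul_exp_neg_div_le_expLogPrimitiveDeriv_one hx hz.1
end
end
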